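/- arXiv:2201.05134 — 5 statements merged into one kernel-verified Lean document; each statement's English description precedes it below -/
import Mathlib

section
/- Let P be an edge-generic polytope (u − v ≠ u′ − v′ for any two distinct edges uv, u′v′ of P) and let c be a generic objective function. Then for every c-arborescence A of (P,c) there exist a normalization N and a weight w such that A = A^N_{P,c}(w). -/
open Pointwise

/-- Euclidean dot product on `Fin d → ℝ`. -/
def dotp {d : ℕ} (c x : Fin d → ℝ) : ℝ := ∑ i, c i * x i

/-- The face of `Q` on which `x ↦ ⟨w,x⟩` is maximized. -/
def faceOf {d : ℕ} (w : Fin d → ℝ) (Q : Set (Fin d → ℝ)) : Set (Fin d → ℝ) :=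
  {x | x ∈ Q ∧ ∀ y ∈ Q, dotp w y ≤ dotp w x}

/-- `v` is a vertex of `P`, i.e. `{v}` is an exposed face. -/
def IsVertexOf {d : ℕ} (P : Set (Fin d → ℝ)) (v : Fin d → ℝ) : Prop :=
  ∃ w, faceOf w P = {v}

/-- `u` and `v` span an edge (a 1-dimensional face) of `P`. -/
def IsEdgeOf {d : ℕ} (P : Set (Fin d → ℝ)) (u v : Fin d → ℝ) : Prop :=
  u ≠ v ∧ ∃ w, faceOf w P = segment ℝ u v

/-- `c` is a generic objective function for `P`. -/
def IsGenericObj {d : ℕ} (P : Set (Fin d → ℝ)) (c : Fin d → ℝ) : Prop :=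
  ∀ u v, IsEdgeOf P u v → dotp c u ≠ dotp c v

/-- A normalization for `P`: nonzero on differences of adjacent vertices. -/
def IsNormalization {d : ℕ} (P : Set (Fin d → ℝ)) (N : (Fin d → ℝ) → ℝ) : Prop :=
  ∀ u v, IsEdgeOf P u v → N (u - v) ≠ 0

/-- `A` is a `c`-arborescence of `(P,c)` with optimal vertex `vopt`. -/
def IsArbor {d : ℕ} (P : Set (Fin d → ℝ)) (c vopt : Fin d → ℝ)
    (A : (Fin d → ℝ) → (Fin d → ℝ)) : Prop :=
  (∀ v, IsVertexOf P v → (A v = v ↔ v = vopt)) ∧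
  (∀ v, IsVertexOf P v → v ≠ vopt → IsEdgeOf P v (A v) ∧ dotp c v < dotp c (A v))

/-- `A` is the coherent arborescence `A^N_{P,c}(w)`: at every non-optimal vertex, `A v` is
the unique maximizer of `u ↦ wᵀ(u-v)/N(u-v)` over the `c`-improving neighbors of `v`. -/
def IsCoherentArb {d : ℕ} (P : Set (Fin d → ℝ)) (c vopt : Fin d → ℝ)
    (N : (Fin d → ℝ) → ℝ) (w : Fin d → ℝ) (A : (Fin d → ℝ) → (Fin d → ℝ)) : Prop :=
  IsArbor P c vopt A ∧
  ∀ v, IsVertexOf P v → v ≠ vopt → ∀ u, IsEdgeOf P v u → dotp c v < dotp c u → u ≠ A v →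
    dotp w (u - v) / N (u - v) < dotp w (A v - v) / N (A v - v)

/-- `Ψ^N(A)`; the summand is `0` when `A v = v`. -/
noncomputable def PsiPt {d : ℕ} (V : Finset (Fin d → ℝ)) (N : (Fin d → ℝ) → ℝ)
    (A : (Fin d → ℝ) → (Fin d → ℝ)) : Fin d → ℝ :=
  ∑ v ∈ V, (N (A v - v))⁻¹ • (A v - v)

/-- The pivot rule polytope `Π^N_{P,c}`, for `P` with vertex set `V`. -/
noncomputable def pivotPolytope {d : ℕ} (P : Set (Fin d → ℝ)) (V : Finset (Fin d → ℝ))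
    (c vopt : Fin d → ℝ) (N : (Fin d → ℝ) → ℝ) : Set (Fin d → ℝ) :=
  convexHull ℝ {p | ∃ A, IsArbor P c vopt A ∧ p = PsiPt V N A}

/-- `P` is edge-generic: distinct edges have distinct difference vectors. -/
def EdgeGeneric {d : ℕ} (P : Set (Fin d → ℝ)) : Prop :=
  ∀ u v u' v', IsEdgeOf P u v → IsEdgeOf P u' v' → u - v = u' - v' → u = u' ∧ v = v'


lemma dotp_sub' {d : ℕ} (c u v : Fin d → ℝ) : dotp c (u - v) = dotp c u - dotp c v := by
  simp [dotp, mul_sub, Finset.sum_sub_distrib]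

lemma edge_symm' {d : ℕ} {P : Set (Fin d → ℝ)} {u v : Fin d → ℝ}
    (h : IsEdgeOf P u v) : IsEdgeOf P v u := by
  obtain ⟨hne, w, hw⟩ := h
  exact ⟨hne.symm, w, by rw [hw, segment_symm]⟩

/-- Proposition: edge-generic polytopes realize every arborescence as a
coherent one. -/
theorem statement1 {d : ℕ} (P : Set (Fin d → ℝ))
    (hpoly : ∃ S : Finset (Fin d → ℝ), P = convexHull ℝ (S : Set (Fin d → ℝ)))
    (hEG : EdgeGeneric P)
    (c : Fin d → ℝ) (hc : IsGenericObj P c)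
    (vopt : Fin d → ℝ) (hopt : faceOf c P = {vopt})
    (A : (Fin d → ℝ) → (Fin d → ℝ)) (hA : IsArbor P c vopt A) :
    ∃ (N : (Fin d → ℝ) → ℝ) (w : Fin d → ℝ),
      IsNormalization P N ∧ IsCoherentArb P c vopt N w A := by
  classical
  obtain ⟨hfix, hedge⟩ := hA
  refine ⟨fun x => if ∃ v, IsVertexOf P v ∧ v ≠ vopt ∧ A v - v = x
      then dotp c x / 2 else dotp c x, c, ?_, ⟨hfix, hedge⟩, ?_⟩
  · intro u v huv
    have hne : dotp c (u - v) ≠ 0 := by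
      rw [dotp_sub']; exact sub_ne_zero.mpr (hc u v huv)
    beta_reduce
    split <;> simp [hne]
  · intro v hv hvne u huvedge hcu hune
    obtain ⟨hAve, hAvlt⟩ := hedge v hv hvne
    have htree : (if ∃ v', IsVertexOf P v' ∧ v' ≠ vopt ∧ A v' - v' = A v - v
        then dotp c (A v - v) / 2 else dotp c (A v - v)) = dotp c (A v - v) / 2 :=
      if_pos ⟨v, hv, hvne, rfl⟩
    have hnon : (if ∃ v', IsVertexOf P v' ∧ v' ≠ vopt ∧ A v' - v' = u - v
        then dotp c (u - v) / 2 else dotp c (u - v)) = dotp c (u - v) := by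
      rw [if_neg]
      rintro ⟨v', hv', hv'ne, heq⟩
      have e1 : IsEdgeOf P (A v') v' := edge_symm' (hedge v' hv' hv'ne).1
      obtain ⟨h1, h2⟩ := hEG (A v') v' u v e1 (edge_symm' huvedge) heq
      exact hune (h2 ▸ h1.symm)
    beta_reduce
    rw [htree, hnon]
    have h1 : (0:ℝ) < dotp c (u - v) := by rw [dotp_sub']; linarith
    have h2 : (0:ℝ) < dotp c (A v - v) := by rw [dotp_sub']; linarith
    rw [div_self h1.ne']
    rw [show dotp c (A v - v) / (dotp c (A v - v) / 2) = 2 by field_simp]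
    norm_num
end

section
/- Let (P,c) be a linear program with c generic and let N be a normalization. Then the pivot rule polytope satisfies the Minkowski sum decomposition Π^N_{P,c} = Σ_{v ∈ V(P), v ≠ v_opt} conv{ (u−v)/N(u−v) : u ∈ N(P,c,v) }. Moreover, for every generic weight w the face (Π^N_{P,c})^w is the single vertex Ψ^N(A^N_{P,c}(w)), and for any two generic weights w, w′ one has A^N_{P,c}(w) = A^N_{P,c}(w′) if and only if (Π^N_{P,c})^w = (Π^N_{P,c})^{w′}. -/
open Pointwise

section aux
variable {d : ℕ}

lemma dotp_add (w x y : Fin d → ℝ) : dotp w (x + y) = dotp w x + dotp w y := by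
  simp [dotp, mul_add, Finset.sum_add_distrib]

lemma dotp_smul (w : Fin d → ℝ) (r : ℝ) (x : Fin d → ℝ) : dotp w (r • x) = r * dotp w x := by
  simp [dotp, Finset.mul_sum, mul_left_comm]

noncomputable def dotL (w : Fin d → ℝ) : (Fin d → ℝ) →ₗ[ℝ] ℝ where
  toFun x := dotp w x
  map_add' x y := dotp_add w x y
  map_smul' r x := dotp_smul w r x

lemma dotp_sum {ι : Type*} (w : Fin d → ℝ) (t : Finset ι) (f : ι → Fin d → ℝ) :
    dotp w (∑ i ∈ t, f i) = ∑ i ∈ t, dotp w (f i) := map_sum (dotL w) f t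

lemma dot_le_on_hull {w : Fin d → ℝ} {S : Set (Fin d → ℝ)} {a : ℝ}
    (h : ∀ y ∈ S, dotp w y ≤ a) : ∀ x ∈ convexHull ℝ S, dotp w x ≤ a := by
  intro x hx
  have hc : Convex ℝ {x : Fin d → ℝ | dotp w x ≤ a} :=
    convex_halfSpace_le (dotL w).isLinear a
  exact convexHull_min h hc hx

lemma face_hull_eq_singleton {w p : Fin d → ℝ} {S : Set (Fin d → ℝ)}
    (hp : p ∈ S) (hmax : ∀ y ∈ S, y ≠ p → dotp w y < dotp w p) :
    faceOf w (convexHull ℝ S) = {p} := by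
  have hSle : ∀ y ∈ S, dotp w y ≤ dotp w p := by
    intro y hy
    rcases eq_or_ne y p with h | h
    · rw [h]
    · exact (hmax y hy h).le
  have hhull := dot_le_on_hull hSle
  apply Set.eq_singleton_iff_unique_mem.mpr
  refine ⟨⟨subset_convexHull ℝ S hp, fun y hy => hhull y hy⟩, ?_⟩
  rintro x ⟨hx, hxmax⟩
  have hxp : dotp w x = dotp w p :=
    le_antisymm (hhull x hx) (hxmax p (subset_convexHull ℝ S hp))
  rw [convexHull_eq] at hx
  obtain ⟨ι, t, wt, z, hw0, hw1, hz, hcm⟩ := hx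
  rw [Finset.centerMass_eq_of_sum_1 _ _ hw1] at hcm
  have hall : ∀ i ∈ t, wt i • z i = wt i • p := by
    intro i hi
    rcases (hw0 i hi).lt_or_eq with hpos | hzero
    · by_contra hne
      have hzi : z i ≠ p := fun h => hne (by rw [h])
      have hlt : dotp w (z i) < dotp w p := hmax _ (hz i hi) hzi
      have hsum : dotp w x = ∑ j ∈ t, wt j * dotp w (z j) := by
        rw [← hcm, dotp_sum]
        exact Finset.sum_congr rfl fun j _ => dotp_smul w (wt j) (z j)
      have hstrict : ∑ j ∈ t, wt j * dotp w (z j) < ∑ j ∈ t, wt j * dotp w p :=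
        Finset.sum_lt_sum
          (fun j hj => mul_le_mul_of_nonneg_left (hSle _ (hz j hj)) (hw0 j hj))
          ⟨i, hi, mul_lt_mul_of_pos_left hlt hpos⟩
      rw [← Finset.sum_mul, hw1, one_mul] at hstrict
      rw [hsum] at hxp
      exact absurd hxp (ne_of_lt hstrict)
    · rw [← hzero, zero_smul, zero_smul]
  rw [← hcm, Finset.sum_congr rfl hall, ← Finset.sum_smul, hw1, one_smul]

lemma faceOf_add {w p q : Fin d → ℝ} {Q R : Set (Fin d → ℝ)}
    (hQ : faceOf w Q = {p}) (hR : faceOf w R = {q}) :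
    faceOf w (Q + R) = {p + q} := by
  have hpf : p ∈ faceOf w Q := by rw [hQ]; rfl
  have hqf : q ∈ faceOf w R := by rw [hR]; rfl
  obtain ⟨hpQ, hpmax⟩ := hpf
  obtain ⟨hqR, hqmax⟩ := hqf
  have hmemsum : p + q ∈ Q + R := Set.add_mem_add hpQ hqR
  have hub : ∀ y ∈ Q + R, dotp w y ≤ dotp w (p + q) := by
    rintro y hy
    rw [Set.mem_add] at hy
    obtain ⟨a, ha, b, hb, rfl⟩ := hy
    rw [dotp_add, dotp_add]
    exact add_le_add (hpmax a ha) (hqmax b hb)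
  apply Set.eq_singleton_iff_unique_mem.mpr
  refine ⟨⟨hmemsum, hub⟩, ?_⟩
  rintro x ⟨hx, hxmax⟩
  have hxval : dotp w x = dotp w (p + q) :=
    le_antisymm (hub x hx) (hxmax _ hmemsum)
  rw [Set.mem_add] at hx
  obtain ⟨a, ha, b, hb, rfl⟩ := hx
  rw [dotp_add, dotp_add] at hxval
  have hale : dotp w a ≤ dotp w p := hpmax a ha
  have hble : dotp w b ≤ dotp w q := hqmax b hb
  have haeq : dotp w a = dotp w p := by linarith
  have hbeq : dotp w b = dotp w q := by linarith
  have hap : a ∈ faceOf w Q := ⟨ha, fun y hy => (hpmax y hy).trans haeq.ge⟩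
  have hbq : b ∈ faceOf w R := ⟨hb, fun y hy => (hqmax y hy).trans hbeq.ge⟩
  rw [hQ] at hap; rw [hR] at hbq
  rw [Set.mem_singleton_iff] at hap hbq
  rw [hap, hbq]

lemma faceOf_zero (w : Fin d → ℝ) : faceOf w (0 : Set (Fin d → ℝ)) = {0} := by
  apply Set.eq_singleton_iff_unique_mem.mpr
  constructor
  · exact ⟨Set.zero_mem_zero, fun y hy => by rw [Set.mem_zero] at hy; rw [hy]⟩
  · rintro x ⟨hx, _⟩
    rwa [Set.mem_zero] at hx

lemma faceOf_sum {ι : Type*} [DecidableEq ι] {w : Fin d → ℝ} {T : Finset ι}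
    {Q : ι → Set (Fin d → ℝ)} {p : ι → Fin d → ℝ}
    (h : ∀ v ∈ T, faceOf w (Q v) = {p v}) :
    faceOf w (∑ v ∈ T, Q v) = {∑ v ∈ T, p v} := by
  induction T using Finset.induction with
  | empty => simpa using faceOf_zero w
  | @insert a s hnot ih =>
      rw [Finset.sum_insert hnot, Finset.sum_insert hnot]
      exact faceOf_add (h a (Finset.mem_insert_self a s))
        (ih fun v hv => h v (Finset.mem_insert_of_mem hv))

lemma mem_setSum {ι : Type*} [DecidableEq ι] {T : Finset ι} {S : ι → Set (Fin d → ℝ)}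
    {x : Fin d → ℝ} :
    x ∈ ∑ v ∈ T, S v ↔ ∃ g : ι → Fin d → ℝ, (∀ v ∈ T, g v ∈ S v) ∧ x = ∑ v ∈ T, g v := by
  classical
  induction T using Finset.induction generalizing x with
  | empty => simp [Set.mem_zero]
  | @insert a s hnot ih =>
      rw [Finset.sum_insert hnot, Set.mem_add]
      constructor
      · rintro ⟨u, hu, b, hb, rfl⟩
        obtain ⟨g, hg, rfl⟩ := ih.mp hb
        refine ⟨Function.update g a u, ?_, ?_⟩
        · intro v hv
          rcases Finset.mem_insert.mp hv with rfl | hv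
          · simpa using hu
          · rw [Function.update_of_ne (fun h : v = a => hnot (h ▸ hv))]
            exact hg v hv
        · rw [Finset.sum_insert hnot, Function.update_self]
          congr 1
          exact (Finset.sum_congr rfl fun v hv =>
            (Function.update_of_ne (fun h : v = a => hnot (h ▸ hv)) u g).symm)
      · rintro ⟨g, hg, rfl⟩
        rw [Finset.sum_insert hnot]
        exact ⟨g a, hg a (Finset.mem_insert_self a s), ∑ v ∈ s, g v,
          ih.mpr ⟨g, fun v hv => hg v (Finset.mem_insert_of_mem hv), rfl⟩, rfl⟩

lemma convexHull_setSum {ι : Type*} [DecidableEq ι] {T : Finset ι}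
    (S : ι → Set (Fin d → ℝ)) :
    convexHull ℝ (∑ v ∈ T, S v) = ∑ v ∈ T, convexHull ℝ (S v) := by
  induction T using Finset.induction with
  | empty =>
      simp only [Finset.sum_empty]
      rw [show (0 : Set (Fin d → ℝ)) = {0} from rfl, convexHull_singleton]
  | @insert a s hnot ih =>
      rw [Finset.sum_insert hnot, Finset.sum_insert hnot, convexHull_add, ih]

end aux
/-- Theorem: existence of the pivot rule polytope, its Minkowski sum
decomposition, and the correspondence of its vertices with coherent arborescences. -/
theorem statement2 {d : ℕ} [DecidableEq (Fin d → ℝ)]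
    (P : Set (Fin d → ℝ)) (V : Finset (Fin d → ℝ))
    (hP : P = convexHull ℝ (V : Set (Fin d → ℝ)))
    (hV : ∀ v, v ∈ V ↔ IsVertexOf P v)
    (c vopt : Fin d → ℝ) (hc : IsGenericObj P c) (hopt : faceOf c P = {vopt})
    (N : (Fin d → ℝ) → ℝ) (hN : IsNormalization P N) :
    pivotPolytope P V c vopt N =
      ∑ v ∈ V.erase vopt,
        convexHull ℝ {p : Fin d → ℝ |
          ∃ u, IsEdgeOf P v u ∧ dotp c v < dotp c u ∧ p = (N (u - v))⁻¹ • (u - v)} ∧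
    (∀ w A, IsCoherentArb P c vopt N w A →
        faceOf w (pivotPolytope P V c vopt N) = {PsiPt V N A}) ∧
    (∀ w w' A A', IsCoherentArb P c vopt N w A → IsCoherentArb P c vopt N w' A' →
        (Set.EqOn A A' {v | IsVertexOf P v} ↔
          faceOf w (pivotPolytope P V c vopt N) = faceOf w' (pivotPolytope P V c vopt N))) := by
  classical
  have hvopt_vert : IsVertexOf P vopt := ⟨c, hopt⟩
  have hvopt_mem : vopt ∈ V := (hV vopt).mpr hvopt_vert
  have hconv : ∀ (w x : Fin d → ℝ), dotp w ((N x)⁻¹ • x) = dotp w x / N x := by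
    intro w x; rw [dotp_smul, div_eq_inv_mul]
  have Psi_erase : ∀ A, IsArbor P c vopt A →
      PsiPt V N A = ∑ v ∈ V.erase vopt, (N (A v - v))⁻¹ • (A v - v) := by
    intro A hA
    have h0 : (N (A vopt - vopt))⁻¹ • (A vopt - vopt) = 0 := by
      rw [(hA.1 vopt hvopt_vert).mpr rfl, sub_self, smul_zero]
    unfold PsiPt
    exact (Finset.sum_erase (f := fun v => (N (A v - v))⁻¹ • (A v - v)) V h0).symm
  have hsetEq : {p | ∃ A, IsArbor P c vopt A ∧ p = PsiPt V N A}
      = ∑ v ∈ V.erase vopt, {p : Fin d → ℝ |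
          ∃ u, IsEdgeOf P v u ∧ dotp c v < dotp c u ∧ p = (N (u - v))⁻¹ • (u - v)} := by
    ext x
    rw [Set.mem_setOf_eq, mem_setSum]
    constructor
    · rintro ⟨A, hA, rfl⟩
      refine ⟨fun v => (N (A v - v))⁻¹ • (A v - v), ?_, Psi_erase A hA⟩
      intro v hv
      obtain ⟨hvne, hvV⟩ := Finset.mem_erase.mp hv
      obtain ⟨he, hi⟩ := hA.2 v ((hV v).mp hvV) hvne
      exact ⟨A v, he, hi, rfl⟩
    · rintro ⟨g, hg, rfl⟩
      simp only [Set.mem_setOf_eq] at hg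
      choose u hedge himp heq using hg
      set A : (Fin d → ℝ) → (Fin d → ℝ) :=
        fun x => if hx : x ∈ V.erase vopt then u x hx else x with hAdef
      have hAT : ∀ v (hv : v ∈ V.erase vopt), A v = u v hv := fun v hv => dif_pos hv
      have hAopt : A vopt = vopt := dif_neg (Finset.notMem_erase vopt V)
      have hArb : IsArbor P c vopt A := by
        constructor
        · intro v hvert
          constructor
          · intro hAv
            by_contra hvne
            have hvT : v ∈ V.erase vopt := Finset.mem_erase.mpr ⟨hvne, (hV v).mpr hvert⟩
            rw [hAT v hvT] at hAv
            exact (hedge v hvT).1 hAv.symm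
          · intro hv; subst hv; exact hAopt
        · intro v hvert hvne
          have hvT : v ∈ V.erase vopt := Finset.mem_erase.mpr ⟨hvne, (hV v).mpr hvert⟩
          rw [hAT v hvT]
          exact ⟨hedge v hvT, himp v hvT⟩
      refine ⟨A, hArb, ?_⟩
      rw [Psi_erase A hArb]
      refine Finset.sum_congr rfl fun v hv => ?_
      rw [hAT v hv]
      exact heq v hv
  have part1 : pivotPolytope P V c vopt N =
      ∑ v ∈ V.erase vopt,
        convexHull ℝ {p : Fin d → ℝ |
          ∃ u, IsEdgeOf P v u ∧ dotp c v < dotp c u ∧ p = (N (u - v))⁻¹ • (u - v)} := by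
    rw [pivotPolytope, hsetEq, convexHull_setSum]
  have part2 : ∀ w A, IsCoherentArb P c vopt N w A →
      faceOf w (pivotPolytope P V c vopt N) = {PsiPt V N A} := by
    rintro w A ⟨hA, hcoh⟩
    have hface : ∀ v ∈ V.erase vopt,
        faceOf w (convexHull ℝ {p : Fin d → ℝ |
          ∃ u, IsEdgeOf P v u ∧ dotp c v < dotp c u ∧ p = (N (u - v))⁻¹ • (u - v)})
          = {(N (A v - v))⁻¹ • (A v - v)} := by
      intro v hv
      obtain ⟨hvne, hvV⟩ := Finset.mem_erase.mp hv
      have hvert := (hV v).mp hvV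
      obtain ⟨he, hi⟩ := hA.2 v hvert hvne
      have hpmem : (N (A v - v))⁻¹ • (A v - v) ∈ {p : Fin d → ℝ |
          ∃ u, IsEdgeOf P v u ∧ dotp c v < dotp c u ∧ p = (N (u - v))⁻¹ • (u - v)} :=
        ⟨A v, he, hi, rfl⟩
      apply face_hull_eq_singleton hpmem
      rintro y ⟨u2, he2, hi2, rfl⟩ hne
      have hune : u2 ≠ A v := fun h => hne (by rw [h])
      have hlt := hcoh v hvert hvne u2 he2 hi2 hune
      rw [hconv, hconv]
      exact hlt
    rw [part1, faceOf_sum hface, ← Psi_erase A hA]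
  refine ⟨part1, part2, ?_⟩
  intro w w' A A' hA hA'
  have h2 := part2 w A hA
  have h2' := part2 w' A' hA'
  constructor
  · intro heq2
    rw [h2, h2']
    have hPsi : PsiPt V N A = PsiPt V N A' :=
      Finset.sum_congr rfl fun v hv => by rw [heq2 ((hV v).mp hv)]
    rw [hPsi]
  · intro hfe
    have hPsi : PsiPt V N A = PsiPt V N A' := by
      have h3 : ({PsiPt V N A} : Set (Fin d → ℝ)) = {PsiPt V N A'} := by
        rw [← h2, ← h2', hfe]
      exact Set.singleton_eq_singleton_iff.mp h3
    intro v hvert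
    have hvert' : IsVertexOf P v := hvert
    rcases eq_or_ne v vopt with rfl | hvne
    · rw [(hA.1.1 v hvert').mpr rfl, (hA'.1.1 v hvert').mpr rfl]
    · have hvT : v ∈ V.erase vopt := Finset.mem_erase.mpr ⟨hvne, (hV v).mpr hvert'⟩
      have hle : ∀ x ∈ V.erase vopt,
          dotp w ((N (A' x - x))⁻¹ • (A' x - x)) ≤ dotp w ((N (A x - x))⁻¹ • (A x - x)) := by
        intro x hx
        obtain ⟨hxne, hxV⟩ := Finset.mem_erase.mp hx
        have hxvert := (hV x).mp hxV
        rcases eq_or_ne (A' x) (A x) with h | h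
        · rw [h]
        · obtain ⟨he', hi'⟩ := hA'.1.2 x hxvert hxne
          have hlt := hA.2 x hxvert hxne (A' x) he' hi' h
          rw [hconv, hconv]
          exact hlt.le
      have hsums : ∑ x ∈ V.erase vopt, dotp w ((N (A' x - x))⁻¹ • (A' x - x))
          = ∑ x ∈ V.erase vopt, dotp w ((N (A x - x))⁻¹ • (A x - x)) := by
        rw [← dotp_sum, ← dotp_sum, ← Psi_erase A hA.1, ← Psi_erase A' hA'.1, hPsi]
      have hterm := (Finset.sum_eq_sum_iff_of_le hle).mp hsums v hvT
      by_contra hne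
      obtain ⟨he', hi'⟩ := hA'.1.2 v hvert' hvne
      have hlt := hA.2 v hvert' hvne (A' v) he' hi' (fun h => hne h.symm)
      rw [hconv, hconv] at hterm
      exact absurd hterm (ne_of_lt hlt)
end

section
/- Let P ⊂ ℝ^d be a simple polytope, c a generic objective function, and N a normalization. For any two weights w, w′ ∈ ℝ^d one has A^N_{P,c}(w) ⪯ A^N_{P,c}(w′) if and only if (Π^N_{P,c})^w ⊆ (Π^N_{P,c})^{w′}. In particular, the poset of coherent c-multi-arborescences of (P,c) ordered by refinement is isomorphic to the face lattice of the pivot rule polytope Π^N_{P,c}. -/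
open Pointwise

/-- `A` is the coherent `c`-multi-arborescence `A^N_{P,c}(w)`: at every non-optimal vertex,
`A v` is the set of maximizers of `u ↦ wᵀ(u-v)/N(u-v)` over the `c`-improving neighbors. -/
def IsCoherentMulti {d : ℕ} (P : Set (Fin d → ℝ)) (c vopt : Fin d → ℝ)
    (N : (Fin d → ℝ) → ℝ) (w : Fin d → ℝ) (A : (Fin d → ℝ) → Set (Fin d → ℝ)) : Prop :=
  A vopt = {vopt} ∧
  ∀ v, IsVertexOf P v → v ≠ vopt →
    A v = {u | (IsEdgeOf P v u ∧ dotp c v < dotp c u) ∧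
      ∀ u', IsEdgeOf P v u' → dotp c v < dotp c u' →
        dotp w (u' - v) / N (u' - v) ≤ dotp w (u - v) / N (u - v)}


section dotpLemmas
variable {d : ℕ}

lemma dotp_smul_right (w x : Fin d → ℝ) (r : ℝ) : dotp w (r • x) = r * dotp w x := by
  unfold dotp
  rw [Finset.mul_sum]
  refine Finset.sum_congr rfl fun i _ => ?_
  simp [mul_comm, mul_assoc, mul_left_comm]

lemma dotp_sub_right (w x y : Fin d → ℝ) : dotp w (x - y) = dotp w x - dotp w y := by
  unfold dotp
  rw [← Finset.sum_sub_distrib]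
  refine Finset.sum_congr rfl fun i _ => ?_
  simp [mul_sub]

lemma dotp_zero_right (w : Fin d → ℝ) : dotp w 0 = 0 := by
  simp [dotp]

lemma dotp_sum_right {α : Type*} (w : Fin d → ℝ) (s : Finset α) (f : α → (Fin d → ℝ)) :
    dotp w (∑ a ∈ s, f a) = ∑ a ∈ s, dotp w (f a) := by
  unfold dotp
  rw [Finset.sum_comm]
  refine Finset.sum_congr rfl fun i _ => ?_
  rw [Finset.sum_apply, Finset.mul_sum]

lemma dotp_add_left (w w' x : Fin d → ℝ) : dotp (w + w') x = dotp w x + dotp w' x := by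
  unfold dotp
  rw [← Finset.sum_add_distrib]
  refine Finset.sum_congr rfl fun i _ => ?_
  simp [add_mul]

lemma dotp_smul_left (w x : Fin d → ℝ) (r : ℝ) : dotp (r • w) x = r * dotp w x := by
  unfold dotp
  rw [Finset.mul_sum]
  refine Finset.sum_congr rfl fun i _ => ?_
  simp [mul_assoc]

lemma dotp_self_pos {x : Fin d → ℝ} (hx : x ≠ 0) : 0 < dotp x x := by
  have h0 : (0:ℝ) ≤ dotp x x := Finset.sum_nonneg fun i _ => mul_self_nonneg _
  rcases h0.lt_or_eq with h | h
  · exact h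
  · exfalso
    apply hx
    funext i
    have := (Finset.sum_eq_zero_iff_of_nonneg (fun i _ => mul_self_nonneg (x i))).mp h.symm
    have hi := this i (Finset.mem_univ i)
    exact mul_self_eq_zero.mp hi

lemma isLinearMap_dotp (w : Fin d → ℝ) : IsLinearMap ℝ (dotp w) := by
  constructor
  · intro x y
    unfold dotp
    rw [← Finset.sum_add_distrib]
    exact Finset.sum_congr rfl fun i _ => by simp [mul_add]
  · intro r x
    simpa [smul_eq_mul] using dotp_smul_right w x r

lemma dotp_div_eq (w x : Fin d → ℝ) (r : ℝ) : dotp w x / r = dotp w (r⁻¹ • x) := by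
  rw [dotp_smul_right, div_eq_inv_mul]

/-- common nonvanishing vector for a finite family of nonzero vectors -/
lemma exists_common_nonvanishing {α : Type*} (s : Finset α) (g : α → (Fin d → ℝ))
    (hg : ∀ a ∈ s, g a ≠ 0) : ∃ u, ∀ a ∈ s, dotp u (g a) ≠ 0 := by
  classical
  induction s using Finset.induction_on with
  | empty => exact ⟨0, fun a ha => absurd ha (Finset.notMem_empty a)⟩
  | @insert a s ha ih =>
    obtain ⟨u, hu⟩ := ih fun b hb => hg b (Finset.mem_insert_of_mem hb)
    have hga : g a ≠ 0 := hg a (Finset.mem_insert_self a s)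
    -- choose t avoiding bad values
    set bad : Finset ℝ := insert ((- dotp u (g a)) / dotp (g a) (g a))
      (s.image fun b => (- dotp u (g b)) / dotp (g a) (g b)) with hbad
    obtain ⟨t, ht⟩ := Infinite.exists_notMem_finset bad
    refine ⟨u + t • g a, fun b hb => ?_⟩
    have key : ∀ (z : Fin d → ℝ), dotp (u + t • g a) z = dotp u z + t * dotp (g a) z := by
      intro z; rw [dotp_add_left, dotp_smul_left]
    rcases Finset.mem_insert.mp hb with rfl | hb
    · rw [key]
      have hpos : dotp (g b) (g b) ≠ 0 := ne_of_gt (dotp_self_pos hga)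
      intro hcon
      apply ht
      rw [hbad]
      apply Finset.mem_insert.mpr
      left
      field_simp
      linarith [hcon]
    · rw [key]
      by_cases hz : dotp (g a) (g b) = 0
      · rw [hz]; simpa using hu b hb
      · intro hcon
        apply ht
        rw [hbad]
        apply Finset.mem_insert.mpr
        right
        refine Finset.mem_image.mpr ⟨b, hb, ?_⟩
        field_simp
        linarith [hcon]

end dotpLemmas

section hullLemmas
variable {d : ℕ}

lemma dotp_le_of_mem_hull {G : Set (Fin d → ℝ)} {w : Fin d → ℝ} {M : ℝ}
    (hG : ∀ g ∈ G, dotp w g ≤ M) {p : Fin d → ℝ} (hp : p ∈ convexHull ℝ G) :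
    dotp w p ≤ M := by
  have : convexHull ℝ G ⊆ {x | dotp w x ≤ M} :=
    convexHull_min hG (convex_halfSpace_le (isLinearMap_dotp w) M)
  exact this hp

lemma dotp_ge_of_mem_hull {G : Set (Fin d → ℝ)} {w : Fin d → ℝ} {M : ℝ}
    (hG : ∀ g ∈ G, M ≤ dotp w g) {p : Fin d → ℝ} (hp : p ∈ convexHull ℝ G) :
    M ≤ dotp w p := by
  have : convexHull ℝ G ⊆ {x | M ≤ dotp w x} :=
    convexHull_min hG (convex_halfSpace_ge (isLinearMap_dotp w) M)
  exact this hp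

/-- support lemma: on the `w`-maximal points of a hull, any functional that is constant on
the `w`-maximal generators takes that same value. -/
lemma dotp_eq_on_face {G : Set (Fin d → ℝ)} {w w' : Fin d → ℝ} {M M' : ℝ}
    (hb : ∀ g ∈ G, dotp w g ≤ M)
    (hkey : ∀ g ∈ G, dotp w g = M → dotp w' g = M')
    {p : Fin d → ℝ} (hp : p ∈ convexHull ℝ G) (hpM : dotp w p = M) :
    dotp w' p = M' := by
  classical
  rw [convexHull_eq] at hp
  obtain ⟨ι, t, wt, z, h0, h1, hz, hpt⟩ := hp
  rw [Finset.centerMass_eq_of_sum_1 t z h1] at hpt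
  have hdot : ∀ (ω : Fin d → ℝ), dotp ω p = ∑ i ∈ t, wt i * dotp ω (z i) := by
    intro ω
    rw [← hpt, dotp_sum_right]
    exact Finset.sum_congr rfl fun i _ => dotp_smul_right ω (z i) (wt i)
  have hsum0 : ∑ i ∈ t, wt i * (M - dotp w (z i)) = 0 := by
    have : ∑ i ∈ t, wt i * (M - dotp w (z i))
        = (∑ i ∈ t, wt i) * M - ∑ i ∈ t, wt i * dotp w (z i) := by
      rw [Finset.sum_mul, ← Finset.sum_sub_distrib]
      exact Finset.sum_congr rfl fun i _ => by ring
    rw [this, h1, ← hdot w, hpM]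
    ring
  have hterm : ∀ i ∈ t, wt i * (M - dotp w (z i)) = 0 :=
    (Finset.sum_eq_zero_iff_of_nonneg fun i hi =>
      mul_nonneg (h0 i hi) (sub_nonneg.mpr (hb (z i) (hz i hi)))).mp hsum0
  have hterm' : ∀ i ∈ t, wt i * dotp w' (z i) = wt i * M' := by
    intro i hi
    rcases mul_eq_zero.mp (hterm i hi) with h | h
    · rw [h, zero_mul, zero_mul]
    · have : dotp w (z i) = M := by linarith [sub_eq_zero.mp h]
      rw [hkey (z i) (hz i hi) this]
  rw [hdot w', Finset.sum_congr rfl hterm', ← Finset.sum_mul, h1, one_mul]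

/-- membership version: a `w`-maximal point of the hull of a finite set lies in the hull of
the `w`-maximal generators. -/
lemma mem_hull_argmax {s : Finset (Fin d → ℝ)} {w : Fin d → ℝ} {M : ℝ}
    (hb : ∀ g ∈ s, dotp w g ≤ M)
    {p : Fin d → ℝ} (hp : p ∈ convexHull ℝ (s : Set (Fin d → ℝ))) (hpM : dotp w p = M) :
    p ∈ convexHull ℝ {x | x ∈ s ∧ dotp w x = M} := by
  classical
  rw [convexHull_eq] at hp
  obtain ⟨ι, t, wt, z, h0, h1, hz, hpt⟩ := hp
  have hsum0 : ∑ i ∈ t, wt i * (M - dotp w (z i)) = 0 := by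
    have hdot : dotp w p = ∑ i ∈ t, wt i * dotp w (z i) := by
      rw [← hpt, Finset.centerMass_eq_of_sum_1 t z h1, dotp_sum_right]
      exact Finset.sum_congr rfl fun i _ => dotp_smul_right w (z i) (wt i)
    have : ∑ i ∈ t, wt i * (M - dotp w (z i))
        = (∑ i ∈ t, wt i) * M - ∑ i ∈ t, wt i * dotp w (z i) := by
      rw [Finset.sum_mul, ← Finset.sum_sub_distrib]
      exact Finset.sum_congr rfl fun i _ => by ring
    rw [this, h1, ← hdot, hpM]
    ring
  have hterm : ∀ i ∈ t, wt i * (M - dotp w (z i)) = 0 :=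
    (Finset.sum_eq_zero_iff_of_nonneg fun i hi =>
      mul_nonneg (h0 i hi) (sub_nonneg.mpr (hb (z i) (hz i hi)))).mp hsum0
  -- restrict to nonzero weights
  have hmem : ∀ i ∈ t.filter (fun i => wt i ≠ 0), z i ∈ {x | x ∈ s ∧ dotp w x = M} := by
    intro i hi
    obtain ⟨hit, hwne⟩ := Finset.mem_filter.mp hi
    refine ⟨hz i hit, ?_⟩
    rcases mul_eq_zero.mp (hterm i hit) with h | h
    · exact absurd h hwne
    · linarith [sub_eq_zero.mp h]
  have hsum' : (0:ℝ) < ∑ i ∈ t.filter (fun i => wt i ≠ 0), wt i := by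
    rw [Finset.sum_filter_ne_zero, h1]; norm_num
  have := Finset.centerMass_mem_convexHull (t.filter (fun i => wt i ≠ 0))
    (fun i hi => h0 i (Finset.mem_filter.mp hi).1) hsum' hmem
  rwa [Finset.centerMass_filter_ne_zero, hpt] at this

end hullLemmas

section faceLemmas
variable {d : ℕ}

lemma face_hull_finset (w : Fin d → ℝ) (s : Finset (Fin d → ℝ)) :
    faceOf w (convexHull ℝ (s : Set (Fin d → ℝ)))
      = convexHull ℝ {x | x ∈ s ∧ ∀ y ∈ s, dotp w y ≤ dotp w x} := by
  classical
  rcases s.eq_empty_or_nonempty with rfl | hs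
  · simp [faceOf]
  obtain ⟨xm, hxm, hmax⟩ := s.exists_max_image (dotp w) hs
  set M := dotp w xm with hM
  have hbs : ∀ g ∈ (s : Set (Fin d → ℝ)), dotp w g ≤ M := fun g hg => hmax g hg
  have hargeq : {x | x ∈ s ∧ ∀ y ∈ s, dotp w y ≤ dotp w x} = {x | x ∈ s ∧ dotp w x = M} := by
    ext x
    constructor
    · rintro ⟨hxs, hx⟩
      exact ⟨hxs, le_antisymm (hmax x hxs) (hx xm hxm)⟩
    · rintro ⟨hxs, hx⟩
      exact ⟨hxs, fun y hy => (hmax y hy).trans hx.ge⟩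
  rw [hargeq]
  ext p
  constructor
  · rintro ⟨hpQ, hpmax⟩
    have hle : dotp w p ≤ M := dotp_le_of_mem_hull hbs hpQ
    have hge : M ≤ dotp w p := hpmax xm (subset_convexHull ℝ _ hxm)
    exact mem_hull_argmax (fun g hg => hmax g hg) hpQ (le_antisymm hle hge)
  · intro hp
    have hsub : {x | x ∈ s ∧ dotp w x = M} ⊆ (s : Set (Fin d → ℝ)) := fun x hx => hx.1
    refine ⟨convexHull_mono hsub hp, ?_⟩
    have hpeq : dotp w p = M := by
      have h1 : dotp w p ≤ M := dotp_le_of_mem_hull (fun g hg => hmax g hg.1) hp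
      have h2 : M ≤ dotp w p := dotp_ge_of_mem_hull (fun g hg => hg.2.ge) hp
      exact le_antisymm h1 h2
    intro y hy
    rw [hpeq]
    exact dotp_le_of_mem_hull hbs hy

end faceLemmas


section improving
variable {d : ℕ}

lemma exists_improving {P : Set (Fin d → ℝ)} {V : Finset (Fin d → ℝ)}
    (hP : P = convexHull ℝ (V : Set (Fin d → ℝ)))
    (hV : ∀ v, v ∈ V ↔ IsVertexOf P v)
    {c vopt : Fin d → ℝ} (hopt : faceOf c P = {vopt})
    (v : Fin d → ℝ) (hv : IsVertexOf P v) (hne : v ≠ vopt) :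
    ∃ u, IsEdgeOf P v u ∧ dotp c v < dotp c u := by
  classical
  have hvV : v ∈ V := (hV v).mpr hv
  have hvoptface : vopt ∈ faceOf c P := by rw [hopt]; exact rfl
  have hvopt : IsVertexOf P vopt := ⟨c, hopt⟩
  have hvoV : vopt ∈ V := (hV vopt).mpr hvopt
  have hVP : ∀ x ∈ V, x ∈ P := fun x hx => hP ▸ subset_convexHull ℝ _ hx
  obtain ⟨w₀, hw₀⟩ := hv
  have hvface : v ∈ faceOf w₀ P := by rw [hw₀]; exact rfl
  have hvP : v ∈ P := hvface.1
  have hw₀max : ∀ x ∈ P, dotp w₀ x ≤ dotp w₀ v := hvface.2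
  have hw₀strict : ∀ x ∈ V, x ≠ v → dotp w₀ x < dotp w₀ v := by
    intro x hx hxv
    rcases (hw₀max x (hVP x hx)).lt_or_eq with h | h
    · exact h
    · exfalso
      apply hxv
      have : x ∈ faceOf w₀ P := ⟨hVP x hx, fun y hy => (hw₀max y hy).trans h.ge⟩
      rw [hw₀] at this
      exact this
  have hcv : dotp c v < dotp c vopt := by
    rcases (hvoptface.2 v hvP).lt_or_eq with h | h
    · exact h
    · exfalso
      apply hne
      have : v ∈ faceOf c P := ⟨hvP, fun y hy => (hvoptface.2 y hy).trans h.ge⟩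
      rw [hopt] at this
      exact this
  -- improving vertices
  set I : Finset (Fin d → ℝ) := V.filter (fun x => dotp c v < dotp c x) with hIdef
  have hvoptI : vopt ∈ I := Finset.mem_filter.mpr ⟨hvoV, hcv⟩
  set b : (Fin d → ℝ) → ℝ := fun x => dotp c x - dotp c v with hbdef
  have hbpos : ∀ x ∈ I, 0 < b x := fun x hx => sub_pos.mpr (Finset.mem_filter.mp hx).2
  have hIne : ∀ x ∈ I, x ≠ v := by
    intro x hx hxv
    have := hbpos x hx
    rw [hxv] at this
    simp [hbdef] at this
  -- the pair vectors
  set zf : (Fin d → ℝ) × (Fin d → ℝ) → (Fin d → ℝ) :=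
    fun p => b p.2 • (p.1 - v) - b p.1 • (p.2 - v) with hzfdef
  set Spairs : Finset ((Fin d → ℝ) × (Fin d → ℝ)) := (I ×ˢ I).filter (fun p => zf p ≠ 0)
    with hSdef
  obtain ⟨u, hu⟩ := exists_common_nonvanishing Spairs zf
    (fun p hp => (Finset.mem_filter.mp hp).2)
  -- choosing the perturbation parameter
  set Ve : Finset (Fin d → ℝ) := V.erase v with hVedef
  have hVene : Ve.Nonempty := ⟨vopt, Finset.mem_erase.mpr ⟨fun h => hne h.symm, hvoV⟩⟩
  set a : (Fin d → ℝ) → ℝ := fun x => dotp w₀ (v - x) with hadef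
  have hapos : ∀ x ∈ Ve, 0 < a x := by
    intro x hx
    obtain ⟨hxv, hxV⟩ := Finset.mem_erase.mp hx
    have := hw₀strict x hxV hxv
    simp only [hadef, dotp_sub_right]
    linarith
  set ε : ℝ := Ve.inf' hVene (fun x => a x / (|dotp u (v - x)| + 1)) with hεdef
  have hε : 0 < ε := by
    rw [hεdef, Finset.lt_inf'_iff]
    intro x hx
    exact div_pos (hapos x hx) (by positivity)
  set badT : Finset ℝ := Spairs.image (fun p => (- dotp w₀ (zf p)) / dotp u (zf p)) with hbadT
  have hinf : (Set.Ioo (0:ℝ) ε).Infinite := Set.infinite_coe_iff.mp (Set.Ioo.infinite hε)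
  obtain ⟨t0, ht0⟩ := (hinf.diff badT.finite_toSet).nonempty
  obtain ⟨⟨ht0pos, ht0ε⟩, ht0bad⟩ := ht0
  set ω : Fin d → ℝ := w₀ + t0 • u with hωdef
  have hωeval : ∀ z, dotp ω z = dotp w₀ z + t0 * dotp u z := by
    intro z; rw [hωdef, dotp_add_left, dotp_smul_left]
  set a' : (Fin d → ℝ) → ℝ := fun x => dotp ω (v - x) with ha'def
  have ha'pos : ∀ x ∈ Ve, 0 < a' x := by
    intro x hx
    have h1 : t0 < a x / (|dotp u (v - x)| + 1) := lt_of_lt_of_le ht0ε (by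
      rw [hεdef]; exact Finset.inf'_le _ hx)
    have h2 : t0 * (|dotp u (v - x)| + 1) < a x := by
      rw [← lt_div_iff₀ (by positivity)]; exact h1
    have h3 : - (t0 * |dotp u (v - x)|) ≤ t0 * dotp u (v - x) := by
      nlinarith [neg_abs_le (dotp u (v - x)), ht0pos.le]
    have h4 : t0 * |dotp u (v - x)| < a x := by nlinarith [abs_nonneg (dotp u (v - x))]
    simp only [ha'def, hωeval]
    have : a x = dotp w₀ (v - x) := rfl
    linarith
  have hωz : ∀ p ∈ Spairs, dotp ω (zf p) ≠ 0 := by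
    intro p hp hcon
    rw [hωeval] at hcon
    apply ht0bad
    refine Finset.mem_coe.mpr (Finset.mem_image.mpr ⟨p, hp, ?_⟩)
    have hup : dotp u (zf p) ≠ 0 := hu p hp
    field_simp
    linarith
  -- the parametric step
  set r : (Fin d → ℝ) → ℝ := fun x => a' x / (a' x + b x) with hrdef
  have hIVe : ∀ x ∈ I, x ∈ Ve := fun x hx =>
    Finset.mem_erase.mpr ⟨hIne x hx, (Finset.mem_filter.mp hx).1⟩
  have hdenpos : ∀ x ∈ I, 0 < a' x + b x := fun x hx =>
    add_pos (ha'pos x (hIVe x hx)) (hbpos x hx)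
  obtain ⟨xs, hxsI, hxsmin⟩ := I.exists_min_image r ⟨vopt, hvoptI⟩
  set t : ℝ := r xs with htdef
  have htpos : 0 < t := div_pos (ha'pos xs (hIVe xs hxsI)) (hdenpos xs hxsI)
  have htlt1 : t < 1 := by
    rw [htdef, hrdef, div_lt_one (hdenpos xs hxsI)]
    have := hbpos xs hxsI
    linarith
  set Mset : Finset (Fin d → ℝ) := I.filter (fun x => r x = r xs) with hMdef
  have hxsM : xs ∈ Mset := Finset.mem_filter.mpr ⟨hxsI, rfl⟩
  obtain ⟨ys, hysM, hysmax⟩ := Mset.exists_max_image b ⟨xs, hxsM⟩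
  have hysI : ys ∈ I := (Finset.mem_filter.mp hysM).1
  set wstar : Fin d → ℝ := (1 - t) • ω + t • c with hwstardef
  have heval : ∀ x, dotp wstar (v - x)
      = (1 - t) * dotp ω (v - x) + t * (dotp c v - dotp c x) := by
    intro x
    simp only [hwstardef, dotp_add_left, dotp_smul_left, dotp_sub_right]
    ring
  have hfact : ∀ x ∈ I, dotp wstar (v - x) = (a' x + b x) * (r x - t) := by
    intro x hx
    have hden : a' x + b x ≠ 0 := ne_of_gt (hdenpos x hx)
    have h1 : (a' x + b x) * r x = a' x := by
      rw [hrdef]; field_simp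
    have h2 : (a' x + b x) * (r x - t) = a' x - t * (a' x + b x) := by
      rw [mul_sub, h1]; ring
    rw [heval, h2]
    have hb : dotp c v - dotp c x = - b x := by rw [hbdef]; ring
    have ha : dotp ω (v - x) = a' x := rfl
    rw [hb, ha]; ring
  have hsignI : ∀ x ∈ I, 0 ≤ dotp wstar (v - x) ∧ (dotp wstar (v - x) = 0 ↔ x ∈ Mset) := by
    intro x hx
    rw [hfact x hx]
    constructor
    · exact mul_nonneg (hdenpos x hx).le (sub_nonneg.mpr (hxsmin x hx))
    · constructor
      · intro h
        rcases mul_eq_zero.mp h with h' | h'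
        · exact absurd h' (ne_of_gt (hdenpos x hx))
        · exact Finset.mem_filter.mpr ⟨hx, by rw [← htdef]; linarith [sub_eq_zero.mp h']⟩
      · intro h
        have : r x = t := by rw [htdef]; exact (Finset.mem_filter.mp h).2
        rw [this]; ring
  have hsignO : ∀ x ∈ V, x ≠ v → x ∉ I → 0 < dotp wstar (v - x) := by
    intro x hxV hxv hxI
    have hble : b x ≤ 0 := by
      by_contra h
      exact hxI (Finset.mem_filter.mpr ⟨hxV, by rw [hbdef] at h; push_neg at h; linarith⟩)
    have ha'x : 0 < a' x := ha'pos x (Finset.mem_erase.mpr ⟨hxv, hxV⟩)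
    rw [heval]
    have hb : dotp c v - dotp c x = - b x := by rw [hbdef]; ring
    have ha : dotp ω (v - x) = a' x := rfl
    rw [hb, ha]
    nlinarith
  -- the argmax set is {v} ∪ Mset
  have hargset : {x | x ∈ V ∧ ∀ y ∈ V, dotp wstar y ≤ dotp wstar x}
      = insert v (Mset : Set (Fin d → ℝ)) := by
    have hmaxv : ∀ y ∈ V, dotp wstar y ≤ dotp wstar v := by
      intro y hy
      by_cases hyv : y = v
      · rw [hyv]
      · have h : 0 ≤ dotp wstar (v - y) := by
          by_cases hyI : y ∈ I
          · exact (hsignI y hyI).1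
          · exact (hsignO y hy hyv hyI).le
        rw [dotp_sub_right] at h
        linarith
    ext x
    constructor
    · rintro ⟨hxV, hmax⟩
      by_cases hxv : x = v
      · exact Set.mem_insert_iff.mpr (Or.inl hxv)
      · have h1 : dotp wstar v ≤ dotp wstar x := hmax v hvV
        have h2 : dotp wstar (v - x) = 0 := by
          rw [dotp_sub_right]
          have := hmaxv x hxV
          linarith
        by_cases hxI : x ∈ I
        · exact Set.mem_insert_iff.mpr (Or.inr ((hsignI x hxI).2.mp h2))
        · exact absurd h2 (ne_of_gt (hsignO x hxV hxv hxI))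
    · intro hx
      rcases Set.mem_insert_iff.mp hx with rfl | hxM
      · exact ⟨hvV, hmaxv⟩
      · have hxM' : x ∈ Mset := hxM
        have hxI : x ∈ I := (Finset.mem_filter.mp hxM').1
        have h0 : dotp wstar (v - x) = 0 := (hsignI x hxI).2.mpr hxM'
        rw [dotp_sub_right] at h0
        refine ⟨(Finset.mem_filter.mp hxI).1, fun y hy => ?_⟩
        have := hmaxv y hy
        linarith
  -- collinearity of Mset with v, ys
  have hbys : 0 < b ys := hbpos ys hysI
  have hcoll : ∀ x ∈ Mset, x - v = (b x / b ys) • (ys - v) := by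
    intro x hxM
    have hxI : x ∈ I := (Finset.mem_filter.mp hxM).1
    by_cases hxy : x = ys
    · rw [hxy, div_self (ne_of_gt hbys), one_smul]
    have hz0 : zf (x, ys) = 0 := by
      by_contra hz
      have hp : (x, ys) ∈ Spairs :=
        Finset.mem_filter.mpr ⟨Finset.mem_product.mpr ⟨hxI, hysI⟩, hz⟩
      apply hωz (x, ys) hp
      have hdz : dotp ω (zf (x, ys)) = b ys * dotp ω (x - v) - b x * dotp ω (ys - v) := by
        simp only [hzfdef, dotp_sub_right, dotp_smul_right]
      have hωx : dotp ω (x - v) = - a' x := by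
        rw [ha'def]; simp only [dotp_sub_right]; ring
      have hωy : dotp ω (ys - v) = - a' ys := by
        rw [ha'def]; simp only [dotp_sub_right]; ring
      have hrxy : r x = r ys := by
        rw [(Finset.mem_filter.mp hxM).2, (Finset.mem_filter.mp hysM).2]
      have hcross : a' x * b ys = a' ys * b x := by
        have h := hrxy
        rw [hrdef] at h
        have h' := (div_eq_div_iff (ne_of_gt (hdenpos x hxI)) (ne_of_gt (hdenpos ys hysI))).mp h
        nlinarith
      rw [hdz, hωx, hωy]
      linarith [hcross]
    have hz0' : b ys • (x - v) = b x • (ys - v) := by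
      have := sub_eq_zero.mp hz0
      exact this
    rw [div_eq_inv_mul, ← smul_smul, ← hz0', smul_smul, inv_mul_cancel₀ (ne_of_gt hbys),
      one_smul]
  have hsub : insert v (Mset : Set (Fin d → ℝ)) ⊆ segment ℝ v ys := by
    intro x hx
    rcases Set.mem_insert_iff.mp hx with rfl | hxM
    · exact left_mem_segment ℝ x ys
    · have hxM' : x ∈ Mset := hxM
      set μ : ℝ := b x / b ys with hμdef
      have hμ0 : 0 ≤ μ := le_of_lt (div_pos (hbpos x (Finset.mem_filter.mp hxM').1) hbys)
      have hμ1 : μ ≤ 1 := (div_le_one hbys).mpr (hysmax x hxM')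
      refine ⟨1 - μ, μ, by linarith, hμ0, by ring, ?_⟩
      have h := hcoll x hxM'
      rw [← hμdef] at h
      have : x = v + μ • (ys - v) := by
        rw [← h]; abel
      rw [this, smul_sub]
      module
  have hsegeq : convexHull ℝ (insert v (Mset : Set (Fin d → ℝ))) = segment ℝ v ys := by
    apply le_antisymm
    · exact convexHull_min hsub (convex_segment _ _)
    · rw [← convexHull_pair]
      apply convexHull_mono
      intro x hx
      rcases hx with rfl | hx
      · exact Set.mem_insert _ _
      · simp only [Set.mem_singleton_iff] at hx
        subst hx
        exact Set.mem_insert_of_mem _ hysM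
  refine ⟨ys, ⟨?_, wstar, ?_⟩, (Finset.mem_filter.mp hysI).2⟩
  · intro h
    have := (Finset.mem_filter.mp hysI).2
    rw [← h] at this
    exact lt_irrefl _ this
  · rw [hP, face_hull_finset, hargset, hsegeq]

end improving


section machinery
variable {d : ℕ}

/-- the set of `c`-improving neighbors of `v`. -/
def Eset (P : Set (Fin d → ℝ)) (c : Fin d → ℝ) (v : Fin d → ℝ) : Set (Fin d → ℝ) :=
  {u | IsEdgeOf P v u ∧ dotp c v < dotp c u}

/-- the normalized edge direction. -/
noncomputable def phiv (N : (Fin d → ℝ) → ℝ) (v u : Fin d → ℝ) : Fin d → ℝ :=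
  (N (u - v))⁻¹ • (u - v)

/-- the argmax set of `ω` over the improving neighbors. -/
def Dset (P : Set (Fin d → ℝ)) (c : Fin d → ℝ) (N : (Fin d → ℝ) → ℝ)
    (ω v : Fin d → ℝ) : Set (Fin d → ℝ) :=
  {u | u ∈ Eset P c v ∧ ∀ u' ∈ Eset P c v, dotp ω (phiv N v u') ≤ dotp ω (phiv N v u)}

lemma phiv_self (N : (Fin d → ℝ) → ℝ) (v : Fin d → ℝ) : phiv N v v = 0 := by
  simp [phiv]

lemma dotp_phiv (ω : Fin d → ℝ) (N : (Fin d → ℝ) → ℝ) (v u : Fin d → ℝ) :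
    dotp ω (u - v) / N (u - v) = dotp ω (phiv N v u) := by
  rw [phiv, dotp_smul_right, div_eq_inv_mul]

lemma coherent_desc {P : Set (Fin d → ℝ)} {c vopt N w A}
    (hcoh : IsCoherentMulti P c vopt N w A) {v : Fin d → ℝ}
    (hv : IsVertexOf P v) (hne : v ≠ vopt) : A v = Dset P c N w v := by
  rw [hcoh.2 v hv hne]
  ext u
  simp only [Set.mem_setOf_eq, Dset, Eset, dotp_phiv]
  exact ⟨fun ⟨h1, h2⟩ => ⟨h1, fun u' hu' => h2 u' hu'.1 hu'.2⟩,
    fun ⟨h1, h2⟩ => ⟨h1, fun u' he hi => h2 u' ⟨he, hi⟩⟩⟩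

lemma PsiPt_dotp (ω : Fin d → ℝ) (V : Finset (Fin d → ℝ)) (N : (Fin d → ℝ) → ℝ)
    (B : (Fin d → ℝ) → (Fin d → ℝ)) :
    dotp ω (PsiPt V N B) = ∑ v ∈ V, dotp ω (phiv N v (B v)) := by
  rw [PsiPt, dotp_sum_right]
  exact Finset.sum_congr rfl fun v _ => by rw [phiv]

lemma arbor_fix {P : Set (Fin d → ℝ)} {c vopt B} (hB : IsArbor P c vopt B)
    (hvopt : IsVertexOf P vopt) : B vopt = vopt := (hB.1 vopt hvopt).mpr rfl

lemma edgeSet_finite {P : Set (Fin d → ℝ)}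
    (hsimple : ∀ v, IsVertexOf P v → {u | IsEdgeOf P v u}.ncard = d)
    (v : Fin d → ℝ) (hv : IsVertexOf P v) : {u | IsEdgeOf P v u}.Finite := by
  by_contra h
  have hinf : {u | IsEdgeOf P v u}.Infinite := h
  have hd : d = 0 := ((hsimple v hv).symm.trans hinf.ncard)
  obtain ⟨u, hu⟩ := hinf.nonempty
  exact hu.1 (funext fun i => absurd i.isLt (by omega))

lemma Eset_finite {P : Set (Fin d → ℝ)} {c : Fin d → ℝ}
    (hsimple : ∀ v, IsVertexOf P v → {u | IsEdgeOf P v u}.ncard = d)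
    (v : Fin d → ℝ) (hv : IsVertexOf P v) : (Eset P c v).Finite :=
  (edgeSet_finite hsimple v hv).subset fun u hu => hu.1

lemma Dset_nonempty {P : Set (Fin d → ℝ)} {V : Finset (Fin d → ℝ)}
    (hP : P = convexHull ℝ (V : Set (Fin d → ℝ)))
    (hV : ∀ v, v ∈ V ↔ IsVertexOf P v)
    (hsimple : ∀ v, IsVertexOf P v → {u | IsEdgeOf P v u}.ncard = d)
    {c vopt : Fin d → ℝ} (hopt : faceOf c P = {vopt}) (N : (Fin d → ℝ) → ℝ)
    (ω : Fin d → ℝ) (v : Fin d → ℝ) (hv : IsVertexOf P v) (hne : v ≠ vopt) :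
    (Dset P c N ω v).Nonempty := by
  classical
  have hEne : (Eset P c v).Nonempty := by
    obtain ⟨u, hu⟩ := exists_improving hP hV hopt v hv hne
    exact ⟨u, hu⟩
  have hEfin := Eset_finite (c := c) hsimple v hv
  obtain ⟨u, hu, hmax⟩ := hEfin.toFinset.exists_max_image (fun u => dotp ω (phiv N v u))
    (by rwa [← Set.Finite.toFinset_nonempty hEfin] at hEne)
  rw [Set.Finite.mem_toFinset] at hu
  exact ⟨u, hu, fun u' hu' => hmax u' (hEfin.mem_toFinset.mpr hu')⟩

/-- build an arborescence through a prescribed value of a coherent multi-arborescence. -/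
lemma build_arbor {P : Set (Fin d → ℝ)} {V : Finset (Fin d → ℝ)}
    (hP : P = convexHull ℝ (V : Set (Fin d → ℝ)))
    (hV : ∀ v, v ∈ V ↔ IsVertexOf P v)
    (hsimple : ∀ v, IsVertexOf P v → {u | IsEdgeOf P v u}.ncard = d)
    {c vopt : Fin d → ℝ} (hopt : faceOf c P = {vopt}) {N : (Fin d → ℝ) → ℝ}
    {ω : Fin d → ℝ} {A : (Fin d → ℝ) → Set (Fin d → ℝ)}
    (hA : IsCoherentMulti P c vopt N ω A)
    (v0 u0 : Fin d → ℝ) (hv0 : IsVertexOf P v0) (hu0 : u0 ∈ A v0) :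
    ∃ g, IsArbor P c vopt g ∧ g v0 = u0 ∧
      ∀ v, IsVertexOf P v → v ≠ vopt → g v ∈ A v := by
  classical
  have hvopt : IsVertexOf P vopt := ⟨c, hopt⟩
  have hmem : ∀ v, IsVertexOf P v → v ≠ vopt → ∃ u, u ∈ A v := by
    intro v hv hvne
    rw [coherent_desc hA hv hvne]
    exact Dset_nonempty hP hV hsimple hopt N ω v hv hvne
  choose! sel hsel using hmem
  set g : (Fin d → ℝ) → (Fin d → ℝ) := fun v =>
    if v = v0 then u0 else if v = vopt then vopt else
      if IsVertexOf P v then sel v else v with hgdef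
  have hAE : ∀ v u, IsVertexOf P v → v ≠ vopt → u ∈ A v → u ∈ Eset P c v := by
    intro v u hv hvne hu
    rw [coherent_desc hA hv hvne] at hu
    exact hu.1
  have hg0 : g v0 = u0 := by simp [hgdef]
  have hgval : ∀ v, IsVertexOf P v → v ≠ vopt → g v ∈ A v := by
    intro v hv hvne
    by_cases h0 : v = v0
    · subst h0; rw [hg0]; exact hu0
    · simp only [hgdef, if_neg h0, if_neg hvne, if_pos hv]
      exact hsel v hv hvne
  have hgvopt : g vopt = vopt := by
    by_cases h0 : vopt = v0
    · have h1 : u0 ∈ A vopt := by rw [h0]; exact hu0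
      rw [hA.1] at h1
      have h2 : u0 = vopt := h1
      show (if vopt = v0 then u0 else if vopt = vopt then vopt else
        if IsVertexOf P vopt then sel vopt else vopt) = vopt
      rw [if_pos h0]
      exact h2
    · show (if vopt = v0 then u0 else if vopt = vopt then vopt else
        if IsVertexOf P vopt then sel vopt else vopt) = vopt
      rw [if_neg h0, if_pos rfl]
  refine ⟨g, ⟨?_, ?_⟩, hg0, hgval⟩
  · intro v hv
    constructor
    · intro hgv
      by_contra hvne
      have := hAE v (g v) hv hvne (hgval v hv hvne)
      have himp : dotp c v < dotp c (g v) := this.2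
      rw [hgv] at himp
      exact lt_irrefl _ himp
    · intro hvne; subst hvne; exact hgvopt
  · intro v hv hvne
    exact hAE v (g v) hv hvne (hgval v hv hvne)

end machinery


section part1
variable {d : ℕ}

lemma part1 {P : Set (Fin d → ℝ)} {V : Finset (Fin d → ℝ)}
    (hP : P = convexHull ℝ (V : Set (Fin d → ℝ)))
    (hV : ∀ v, v ∈ V ↔ IsVertexOf P v)
    (hsimple : ∀ v, IsVertexOf P v → {u | IsEdgeOf P v u}.ncard = d)
    {c vopt : Fin d → ℝ} (hopt : faceOf c P = {vopt}) {N : (Fin d → ℝ) → ℝ} :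
    ∀ w w' A A', IsCoherentMulti P c vopt N w A → IsCoherentMulti P c vopt N w' A' →
      ((∀ v, IsVertexOf P v → A v ⊆ A' v) ↔
        faceOf w (pivotPolytope P V c vopt N) ⊆ faceOf w' (pivotPolytope P V c vopt N)) := by
  classical
  have hvopt : IsVertexOf P vopt := ⟨c, hopt⟩
  set G : Set (Fin d → ℝ) := {p | ∃ B, IsArbor P c vopt B ∧ p = PsiPt V N B} with hGdef
  have hPPi : pivotPolytope P V c vopt N = convexHull ℝ G := rfl
  -- the master facts for a coherent multi-arborescence
  have main_facts : ∀ (ω : Fin d → ℝ) (Aω : (Fin d → ℝ) → Set (Fin d → ℝ)),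
      IsCoherentMulti P c vopt N ω Aω →
      ∃ Mω : ℝ,
        (∀ B, IsArbor P c vopt B → dotp ω (PsiPt V N B) ≤ Mω) ∧
        (∃ B, IsArbor P c vopt B ∧
          (∀ v, IsVertexOf P v → v ≠ vopt → B v ∈ Aω v) ∧ dotp ω (PsiPt V N B) = Mω) ∧
        (∀ B, IsArbor P c vopt B → (dotp ω (PsiPt V N B) = Mω ↔
          ∀ v, IsVertexOf P v → v ≠ vopt → B v ∈ Aω v)) := by
    intro ω Aω hAω
    have hvoptA : vopt ∈ Aω vopt := by rw [hAω.1]; exact rfl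
    obtain ⟨gω, hgarb, hgv0, hgsel⟩ := build_arbor hP hV hsimple hopt hAω vopt vopt hvopt hvoptA
    have hgD : ∀ v, IsVertexOf P v → v ≠ vopt → gω v ∈ Dset P c N ω v := by
      intro v hv hne
      rw [← coherent_desc hAω hv hne]
      exact hgsel v hv hne
    have hterm : ∀ B, IsArbor P c vopt B → ∀ v ∈ V,
        dotp ω (phiv N v (B v)) ≤ dotp ω (phiv N v (gω v)) := by
      intro B hB v hvV
      have hv := (hV v).mp hvV
      by_cases hne : v = vopt
      · subst hne
        rw [arbor_fix hB hvopt, arbor_fix hgarb hvopt]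
      · exact (hgD v hv hne).2 (B v) (hB.2 v hv hne)
    refine ⟨dotp ω (PsiPt V N gω), ?_, ⟨gω, hgarb, hgsel, rfl⟩, ?_⟩
    · intro B hB
      rw [PsiPt_dotp, PsiPt_dotp]
      exact Finset.sum_le_sum (hterm B hB)
    · intro B hB
      constructor
      · intro hval v hv hne
        have hvV := (hV v).mpr hv
        have heq := (Finset.sum_eq_sum_iff_of_le (hterm B hB)).mp
          (by rw [← PsiPt_dotp, ← PsiPt_dotp]; exact hval) v hvV
        rw [coherent_desc hAω hv hne]
        refine ⟨hB.2 v hv hne, fun u' hu' => ?_⟩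
        rw [heq]
        exact (hgD v hv hne).2 u' hu'
      · intro hsel
        rw [PsiPt_dotp, PsiPt_dotp]
        refine Finset.sum_congr rfl fun v hvV => ?_
        have hv := (hV v).mp hvV
        by_cases hne : v = vopt
        · subst hne
          rw [arbor_fix hB hvopt, arbor_fix hgarb hvopt]
        · have h1 : B v ∈ Dset P c N ω v := by
            rw [← coherent_desc hAω hv hne]; exact hsel v hv hne
          have h2 := hgD v hv hne
          exact le_antisymm (h2.2 _ h1.1) (h1.2 _ h2.1)
  intro w w' A A' hA hA'
  obtain ⟨M, hMb, ⟨B0, hB0arb, hB0sel, hB0val⟩, hMiff⟩ := main_facts w A hA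
  obtain ⟨M', hM'b, ⟨B0', hB0'arb, hB0'sel, hB0'val⟩, hM'iff⟩ := main_facts w' A' hA'
  have hGb : ∀ g ∈ G, dotp w g ≤ M := by
    rintro g ⟨B, hB, rfl⟩
    exact hMb B hB
  have hGb' : ∀ g ∈ G, dotp w' g ≤ M' := by
    rintro g ⟨B, hB, rfl⟩
    exact hM'b B hB
  have hB0mem : PsiPt V N B0 ∈ pivotPolytope P V c vopt N :=
    hPPi ▸ subset_convexHull ℝ G ⟨B0, hB0arb, rfl⟩
  have hB0'mem : PsiPt V N B0' ∈ pivotPolytope P V c vopt N :=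
    hPPi ▸ subset_convexHull ℝ G ⟨B0', hB0'arb, rfl⟩
  constructor
  · intro hAA' p hp
    have hpPi := hp.1
    have hpM : dotp w p = M := by
      refine le_antisymm (dotp_le_of_mem_hull hGb (hPPi ▸ hpPi)) ?_
      have := hp.2 (PsiPt V N B0) hB0mem
      rw [hB0val] at this
      exact this
    have hpM' : dotp w' p = M' := by
      refine dotp_eq_on_face hGb ?_ (hPPi ▸ hpPi) hpM
      rintro g ⟨B, hB, rfl⟩ hval
      exact (hM'iff B hB).mpr fun v hv hne => hAA' v hv ((hMiff B hB).mp hval v hv hne)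
    refine ⟨hpPi, fun q hq => ?_⟩
    rw [hpM']
    exact dotp_le_of_mem_hull hGb' (hPPi ▸ hq)
  · intro hFF v hv
    by_cases hne : v = vopt
    · subst hne
      rw [hA.1, hA'.1]
    · intro u hu
      obtain ⟨g, hgarb, hg0, hgsel⟩ := build_arbor hP hV hsimple hopt hA v u hv hu
      have hgmem : PsiPt V N g ∈ pivotPolytope P V c vopt N :=
        hPPi ▸ subset_convexHull ℝ G ⟨g, hgarb, rfl⟩
      have hval : dotp w (PsiPt V N g) = M := (hMiff g hgarb).mpr hgsel
      have hface : PsiPt V N g ∈ faceOf w (pivotPolytope P V c vopt N) := by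
        refine ⟨hgmem, fun q hq => ?_⟩
        rw [hval]
        exact dotp_le_of_mem_hull hGb (hPPi ▸ hq)
      have hface' := hFF hface
      have hval' : dotp w' (PsiPt V N g) = M' := by
        refine le_antisymm (dotp_le_of_mem_hull hGb' (hPPi ▸ hgmem)) ?_
        have := hface'.2 (PsiPt V N B0') hB0'mem
        rw [hB0'val] at this
        exact this
      have := (hM'iff g hgarb).mp hval' v hv hne
      rwa [hg0] at this

end part1

/-- (Theorem: faces of the pivot rule polytope correspond to coherent
multi-arborescences; refinement corresponds to face containment, and the poset of coherent
multi-arborescences is isomorphic to the face lattice of `Π^N_{P,c}`). -/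
theorem statement5 {d : ℕ} (P : Set (Fin d → ℝ)) (V : Finset (Fin d → ℝ))
    (hP : P = convexHull ℝ (V : Set (Fin d → ℝ)))
    (hV : ∀ v, v ∈ V ↔ IsVertexOf P v)
    (hdim : affineSpan ℝ P = ⊤)
    (hsimple : ∀ v, IsVertexOf P v → {u | IsEdgeOf P v u}.ncard = d)
    (c vopt : Fin d → ℝ) (hc : IsGenericObj P c) (hopt : faceOf c P = {vopt})
    (N : (Fin d → ℝ) → ℝ) (hN : IsNormalization P N) :
    (∀ w w' A A', IsCoherentMulti P c vopt N w A → IsCoherentMulti P c vopt N w' A' →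
      ((∀ v, IsVertexOf P v → A v ⊆ A' v) ↔
        faceOf w (pivotPolytope P V c vopt N) ⊆ faceOf w' (pivotPolytope P V c vopt N))) ∧
    Nonempty
      ({A : (Fin d → ℝ) → Set (Fin d → ℝ) //
          (∀ v, ¬IsVertexOf P v → A v = ∅) ∧ ∃ w, IsCoherentMulti P c vopt N w A} ≃o
        {F : Set (Fin d → ℝ) // ∃ w, faceOf w (pivotPolytope P V c vopt N) = F}) := by
  classical
  have hvopt : IsVertexOf P vopt := ⟨c, hopt⟩
  have hmain := part1 hP hV hsimple hopt (N := N)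
  refine ⟨hmain, ⟨?_⟩⟩
  -- the canonical coherent multi-arborescence of a weight
  set Acan : (Fin d → ℝ) → (Fin d → ℝ) → Set (Fin d → ℝ) := fun w v =>
    if v = vopt then {vopt} else if IsVertexOf P v then
      {u | (IsEdgeOf P v u ∧ dotp c v < dotp c u) ∧
        ∀ u', IsEdgeOf P v u' → dotp c v < dotp c u' →
          dotp w (u' - v) / N (u' - v) ≤ dotp w (u - v) / N (u - v)} else ∅ with hAcandef
  have hAcan : ∀ w, IsCoherentMulti P c vopt N w (Acan w) := by
    intro w
    constructor
    · simp only [hAcandef, if_pos rfl]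
    · intro v hv hne
      simp only [hAcandef, if_neg hne, if_pos hv]
  have hAcan0 : ∀ w v, ¬IsVertexOf P v → Acan w v = ∅ := by
    intro w v hnv
    have hne : v ≠ vopt := fun h => hnv (h ▸ hvopt)
    simp only [hAcandef, if_neg hne, if_neg hnv]
  set f : {A : (Fin d → ℝ) → Set (Fin d → ℝ) //
        (∀ v, ¬IsVertexOf P v → A v = ∅) ∧ ∃ w, IsCoherentMulti P c vopt N w A} →
      {F : Set (Fin d → ℝ) // ∃ w, faceOf w (pivotPolytope P V c vopt N) = F} :=
    fun A => ⟨faceOf (A.2.2.choose) (pivotPolytope P V c vopt N), A.2.2.choose, rfl⟩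
    with hfdef
  have hconn : ∀ A A', (∀ v, IsVertexOf P v → A.1 v ⊆ A'.1 v) ↔ (f A).1 ⊆ (f A').1 :=
    fun A A' => hmain _ _ _ _ (A.2.2.choose_spec) (A'.2.2.choose_spec)
  have hord : ∀ A A' : {A : (Fin d → ℝ) → Set (Fin d → ℝ) //
        (∀ v, ¬IsVertexOf P v → A v = ∅) ∧ ∃ w, IsCoherentMulti P c vopt N w A},
      (∀ v, IsVertexOf P v → A.1 v ⊆ A'.1 v) ↔ A ≤ A' := by
    intro A A'
    constructor
    · intro h
      show A.1 ≤ A'.1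
      intro v
      by_cases hv : IsVertexOf P v
      · exact h v hv
      · rw [A.2.1 v hv]
        exact Set.empty_subset _
    · intro h v _
      exact h v
  have hinj : Function.Injective f := by
    intro A A' h
    have h1 : (f A).1 = (f A').1 := congrArg Subtype.val h
    apply Subtype.ext
    apply le_antisymm
    · exact ((hord A A').mp ((hconn A A').mpr h1.le) : A ≤ A')
    · exact ((hord A' A).mp ((hconn A' A).mpr h1.ge) : A' ≤ A)
  have hsurj : Function.Surjective f := by
    rintro ⟨F, w, hwF⟩
    set ACsub : {A : (Fin d → ℝ) → Set (Fin d → ℝ) //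
        (∀ v, ¬IsVertexOf P v → A v = ∅) ∧ ∃ w, IsCoherentMulti P c vopt N w A} :=
      ⟨Acan w, fun v hv => hAcan0 w v hv, w, hAcan w⟩ with hACsub
    refine ⟨ACsub, ?_⟩
    apply Subtype.ext
    show faceOf _ (pivotPolytope P V c vopt N) = F
    rw [← hwF]
    have hc1 : IsCoherentMulti P c vopt N (ACsub.2.2.choose) (Acan w) :=
      Classical.choose_spec ACsub.2.2
    apply Set.Subset.antisymm
    · exact (hmain _ w _ _ hc1 (hAcan w)).mp fun v hv => le_refl _
    · exact (hmain w _ _ _ (hAcan w) hc1).mp fun v hv => le_refl _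
  exact
    { toEquiv := Equiv.ofBijective f ⟨hinj, hsurj⟩
      map_rel_iff' := by
        intro A A'
        show (f A).1 ⊆ (f A').1 ↔ A ≤ A'
        rw [← hconn A A']
        exact hord A A' }
end

section
/- Let P, P′ ⊂ ℝ^d be polytopes and c an objective function generic for both. If P and P′ are normally equivalent, then the max-slope pivot rule polytopes coincide: Π^MS_{P,c} = Π^MS_{P′,c}. -/
open Pointwise

/-- `R` is a (nonempty) polytope. -/
def IsPolytopeSet {d : ℕ} (R : Set (Fin d → ℝ)) : Prop :=
  ∃ S : Finset (Fin d → ℝ), S.Nonempty ∧ R = convexHull ℝ (S : Set (Fin d → ℝ))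

/-- `Q` is a weak Minkowski summand of `P'`: `λ • P' = Q + R` for some `λ > 0` and polytope `R`. -/
def IsWeakSummand {d : ℕ} (Q P' : Set (Fin d → ℝ)) : Prop :=
  ∃ (lam : ℝ) (R : Set (Fin d → ℝ)), 0 < lam ∧ IsPolytopeSet R ∧ lam • P' = Q + R

/-- Normal equivalence: each is a weak Minkowski summand of the other. -/
def NormallyEquiv {d : ℕ} (Q R : Set (Fin d → ℝ)) : Prop :=
  IsWeakSummand Q R ∧ IsWeakSummand R Q

namespace PvtAux

variable {d : ℕ}

theorem dotp_comm (c x : Fin d → ℝ) : dotp c x = dotp x c := by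
  simp [dotp, mul_comm]

theorem dotp_add (c x y : Fin d → ℝ) : dotp c (x + y) = dotp c x + dotp c y := by
  simp [dotp, mul_add, Finset.sum_add_distrib]

theorem dotp_smul (c : Fin d → ℝ) (a : ℝ) (x : Fin d → ℝ) : dotp c (a • x) = a * dotp c x := by
  simp [dotp, Finset.mul_sum, mul_left_comm]

theorem isLinearMap_dotp (c : Fin d → ℝ) : IsLinearMap ℝ (dotp c) :=
  ⟨dotp_add c, fun a x => dotp_smul c a x⟩

theorem dotp_neg (c x : Fin d → ℝ) : dotp c (-x) = -dotp c x := by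
  simpa using dotp_smul c (-1) x

theorem dotp_sub (c x y : Fin d → ℝ) : dotp c (x - y) = dotp c x - dotp c y := by
  rw [sub_eq_add_neg, dotp_add, dotp_neg, sub_eq_add_neg]

theorem dotp_add_left (w u x : Fin d → ℝ) : dotp (w + u) x = dotp w x + dotp u x := by
  rw [dotp_comm, dotp_add, dotp_comm x w, dotp_comm x u]

theorem dotp_smul_left (a : ℝ) (w x : Fin d → ℝ) : dotp (a • w) x = a * dotp w x := by
  rw [dotp_comm, dotp_smul, dotp_comm x w]

theorem dotp_neg_left (w x : Fin d → ℝ) : dotp (-w) x = -dotp w x := by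
  rw [dotp_comm, dotp_neg, dotp_comm x w]

theorem dotp_self_pos {x : Fin d → ℝ} (hx : x ≠ 0) : 0 < dotp x x := by
  have h : ∀ i, 0 ≤ x i * x i := fun i => mul_self_nonneg _
  rcases lt_or_eq_of_le (Finset.sum_nonneg fun i _ => h i) with h' | h'
  · exact h'
  · exfalso; apply hx
    funext i
    have := (Finset.sum_eq_zero_iff_of_nonneg (fun i _ => h i)).1 h'.symm i (Finset.mem_univ i)
    exact mul_self_eq_zero.1 this

theorem faceOf_subset (w : Fin d → ℝ) (Q : Set (Fin d → ℝ)) : faceOf w Q ⊆ Q :=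
  fun _ hx => hx.1

theorem faceOf_singleton (w v : Fin d → ℝ) : faceOf w ({v} : Set (Fin d → ℝ)) = {v} := by
  ext x
  constructor
  · exact fun hx => hx.1
  · rintro rfl
    exact ⟨rfl, by rintro y rfl; exact le_rfl⟩

/-- Main structural lemma: the face of the hull of a finite set is the hull of the
set of maximizers. -/
theorem faceOf_hull (w : Fin d → ℝ) (S : Finset (Fin d → ℝ)) (hS : S.Nonempty) :
    ∃ T : Finset (Fin d → ℝ), T.Nonempty ∧ T ⊆ S ∧
      faceOf w (convexHull ℝ (S : Set (Fin d → ℝ))) = convexHull ℝ (T : Set (Fin d → ℝ)) ∧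
      (∀ x ∈ T, ∀ y ∈ S, dotp w y ≤ dotp w x) ∧
      (∀ y ∈ S, (∀ z ∈ S, dotp w z ≤ dotp w y) → y ∈ T) := by
  classical
  obtain ⟨m, hmS, hm⟩ := S.exists_max_image (fun x => dotp w x) hS
  set M := dotp w m with hM
  set T : Finset (Fin d → ℝ) := S.filter (fun y => M ≤ dotp w y) with hT
  have hTS : T ⊆ S := Finset.filter_subset _ _
  have hmT : m ∈ T := Finset.mem_filter.2 ⟨hmS, le_rfl⟩
  have hTval : ∀ x ∈ T, dotp w x = M := by
    intro x hx
    rcases Finset.mem_filter.1 hx with ⟨hxS, hxM⟩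
    exact le_antisymm (hm x hxS) hxM
  have hmax : ∀ x ∈ T, ∀ y ∈ S, dotp w y ≤ dotp w x := by
    intro x hx y hy
    rw [hTval x hx]; exact hm y hy
  have hlast : ∀ y ∈ S, (∀ z ∈ S, dotp w z ≤ dotp w y) → y ∈ T := by
    intro y hy hmaxy
    exact Finset.mem_filter.2 ⟨hy, hmaxy m hmS⟩
  -- bound on the hull
  have hbound : ∀ x ∈ convexHull ℝ (S : Set (Fin d → ℝ)), dotp w x ≤ M := by
    intro x hx
    have : convexHull ℝ (S : Set (Fin d → ℝ)) ⊆ {x | dotp w x ≤ M} :=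
      convexHull_min (fun y hy => hm y hy) (convex_halfSpace_le (isLinearMap_dotp w) M)
    exact this hx
  have hmhull : m ∈ convexHull ℝ (S : Set (Fin d → ℝ)) := subset_convexHull ℝ _ hmS
  refine ⟨T, ⟨m, hmT⟩, hTS, ?_, hmax, hlast⟩
  apply Set.Subset.antisymm
  · -- face ⊆ hull T
    rintro x ⟨hxQ, hxmax⟩
    have hxM : dotp w x = M := le_antisymm (hbound x hxQ) (hxmax m hmhull)
    rw [Finset.convexHull_eq] at hxQ
    obtain ⟨a, ha0, ha1, hax⟩ := hxQ
    rw [Finset.centerMass_eq_of_sum_1 _ _ ha1] at hax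
    simp only [id] at hax
    -- dotp w x = ∑ a y * dotp w y
    have hdx : dotp w x = ∑ y ∈ S, a y * dotp w y := by
      rw [← hax]
      rw [show dotp w (∑ y ∈ S, a y • y) = ∑ y ∈ S, dotp w (a y • y) from
        map_sum (IsLinearMap.mk' _ (isLinearMap_dotp w)) _ _]
      exact Finset.sum_congr rfl fun y _ => dotp_smul w (a y) y
    have hzero : ∑ y ∈ S, a y * (M - dotp w y) = 0 := by
      have : ∑ y ∈ S, a y * (M - dotp w y) = (∑ y ∈ S, a y * M) - ∑ y ∈ S, a y * dotp w y := by
        rw [← Finset.sum_sub_distrib]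
        exact Finset.sum_congr rfl fun y _ => by ring
      rw [this, ← Finset.sum_mul, ha1, one_mul, ← hdx, hxM, sub_self]
    have hterm : ∀ y ∈ S, a y * (M - dotp w y) = 0 := by
      intro y hy
      exact (Finset.sum_eq_zero_iff_of_nonneg fun y hy =>
        mul_nonneg (ha0 y hy) (sub_nonneg.2 (hm y hy))).1 hzero y hy
    have hsupp : ∀ y ∈ S, y ∉ T → a y = 0 := by
      intro y hy hyT
      by_contra hay
      rcases mul_eq_zero.1 (hterm y hy) with h | h
      · exact hay h
      · apply hyT
        apply Finset.mem_filter.2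
        exact ⟨hy, le_of_eq (by linarith [sub_eq_zero.1 h])⟩
    -- x is a convex combination of T
    have hsum1 : ∑ y ∈ T, a y = 1 :=
      (Finset.sum_subset hTS (fun y hy hyT => hsupp y hy hyT)).trans ha1
    have hxT : x = ∑ y ∈ T, a y • y := by
      rw [← hax]
      exact (Finset.sum_subset hTS (fun y hy hyT => by rw [hsupp y hy hyT, zero_smul])).symm
    have hmem := T.centerMass_mem_convexHull (fun y hy => ha0 y (hTS hy))
      (by rw [hsum1]; exact one_pos) (fun y hy => Finset.mem_coe.2 hy)
    rw [Finset.centerMass_eq_of_sum_1 _ _ hsum1] at hmem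
    simpa only [id, ← hxT] using hmem
  · -- hull T ⊆ face
    apply convexHull_min
    · intro t ht
      rcases Finset.mem_coe.1 ht with htT
      refine ⟨subset_convexHull ℝ _ (hTS htT), fun y hy => ?_⟩
      rw [hTval t htT]
      exact hbound y hy
    · intro x1 hx1 x2 hx2 a b ha hb hab
      refine ⟨(convex_convexHull ℝ _) hx1.1 hx2.1 ha hb hab, fun y hy => ?_⟩
      calc dotp w y = a * dotp w y + b * dotp w y := by rw [← add_mul, hab, one_mul]
        _ ≤ a * dotp w x1 + b * dotp w x2 :=
            add_le_add (mul_le_mul_of_nonneg_left (hx1.2 y hy) ha)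
              (mul_le_mul_of_nonneg_left (hx2.2 y hy) hb)
        _ = dotp w (a • x1 + b • x2) := by rw [dotp_add, dotp_smul, dotp_smul]


theorem faceOf_hull_nonempty (w : Fin d → ℝ) (S : Finset (Fin d → ℝ)) (hS : S.Nonempty) :
    (faceOf w (convexHull ℝ (S : Set (Fin d → ℝ)))).Nonempty := by
  obtain ⟨T, hTne, hTS, hface, -, -⟩ := faceOf_hull w S hS
  rw [hface]
  exact ⟨hTne.choose, subset_convexHull ℝ _ (Finset.mem_coe.2 hTne.choose_spec)⟩

/-- If `w` separates points of `S`, the face is a single vertex. -/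
theorem faceOf_hull_injective (w : Fin d → ℝ) (S : Finset (Fin d → ℝ)) (hS : S.Nonempty)
    (hinj : ∀ x ∈ S, ∀ y ∈ S, x ≠ y → dotp w x ≠ dotp w y) :
    ∃ v, faceOf w (convexHull ℝ (S : Set (Fin d → ℝ))) = {v} := by
  obtain ⟨T, hTne, hTS, hface, hmax, -⟩ := faceOf_hull w S hS
  obtain ⟨t, ht⟩ := hTne
  have hT : (T : Set (Fin d → ℝ)) = {t} := by
    apply Set.Subset.antisymm
    · intro x hx
      rcases Finset.mem_coe.1 hx with hxT
      have h1 := hmax x hxT t (hTS ht)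
      have h2 := hmax t ht x (hTS hxT)
      by_contra hne
      exact hinj x (hTS hxT) t (hTS ht) (by simpa using hne) (le_antisymm h2 h1)
    · rintro x rfl; exact Finset.mem_coe.2 ht
  exact ⟨t, by rw [hface, hT, convexHull_singleton]⟩

/-- The `c`-maximal endpoint of a segment is its `c`-face. -/
theorem faceOf_segment {c a b : Fin d → ℝ} (h : dotp c a < dotp c b) :
    faceOf c (segment ℝ a b) = {b} := by
  have hb : b ∈ segment ℝ a b := right_mem_segment ℝ a b
  have hval : ∀ y ∈ segment ℝ a b, dotp c y ≤ dotp c b := by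
    intro y hy
    rw [segment_eq_image' ℝ a b] at hy
    obtain ⟨θ, ⟨h0, h1⟩, rfl⟩ := hy
    rw [dotp_add, dotp_smul, dotp_sub]
    nlinarith
  ext x
  constructor
  · rintro ⟨hx, hxmax⟩
    rw [segment_eq_image' ℝ a b] at hx
    obtain ⟨θ, ⟨h0, h1⟩, rfl⟩ := hx
    have h2 := hxmax b hb
    rw [dotp_add, dotp_smul, dotp_sub] at h2
    have hθ : θ = 1 := by nlinarith
    simp [hθ]
  · rintro rfl
    exact ⟨hb, hval⟩

theorem faceOf_add (w : Fin d → ℝ) (A B : Set (Fin d → ℝ))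
    (hA : (faceOf w A).Nonempty) (hB : (faceOf w B).Nonempty) :
    faceOf w (A + B) = faceOf w A + faceOf w B := by
  obtain ⟨a0, ha0A, ha0⟩ := hA
  obtain ⟨b0, hb0B, hb0⟩ := hB
  apply Set.Subset.antisymm
  · rintro x ⟨hx, hxmax⟩
    rw [Set.mem_add] at hx
    obtain ⟨a, haA, b, hbB, rfl⟩ := hx
    have hab : dotp w a + dotp w b = dotp w a0 + dotp w b0 := by
      have h1 := hxmax (a0 + b0) (Set.add_mem_add ha0A hb0B)
      rw [dotp_add, dotp_add] at h1
      have h2 := ha0 a haA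
      have h3 := hb0 b hbB
      linarith
    have hwa : dotp w a = dotp w a0 := by
      have := ha0 a haA; have := hb0 b hbB; linarith
    have hwb : dotp w b = dotp w b0 := by linarith [ha0 a haA]
    exact Set.add_mem_add ⟨haA, fun y hy => hwa ▸ ha0 y hy⟩ ⟨hbB, fun y hy => hwb ▸ hb0 y hy⟩
  · rintro x hx
    rw [Set.mem_add] at hx
    obtain ⟨a, ⟨haA, ha⟩, b, ⟨hbB, hb⟩, rfl⟩ := hx
    refine ⟨Set.add_mem_add haA hbB, ?_⟩
    rintro y hy
    rw [Set.mem_add] at hy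
    obtain ⟨a', ha'A, b', hb'B, rfl⟩ := hy
    rw [dotp_add, dotp_add]
    exact add_le_add (ha a' ha'A) (hb b' hb'B)

theorem faceOf_smul (w : Fin d → ℝ) {lam : ℝ} (hlam : 0 < lam) (Q : Set (Fin d → ℝ)) :
    faceOf w (lam • Q) = lam • faceOf w Q := by
  ext x
  constructor
  · rintro ⟨hx, hxmax⟩
    obtain ⟨q, hq, rfl⟩ := hx
    refine ⟨q, ⟨hq, fun y hy => ?_⟩, rfl⟩
    have := hxmax (lam • y) (Set.smul_mem_smul_set hy)
    rw [dotp_smul, dotp_smul] at this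
    exact le_of_mul_le_mul_left this hlam
  · rintro ⟨q, ⟨hq, hqmax⟩, rfl⟩
    refine ⟨Set.smul_mem_smul_set hq, ?_⟩
    rintro y ⟨z, hz, rfl⟩
    rw [dotp_smul, dotp_smul]
    exact mul_le_mul_of_nonneg_left (hqmax z hz) hlam.le

theorem add_eq_singleton {A B : Set (Fin d → ℝ)} {v : Fin d → ℝ}
    (hA : A.Nonempty) (hB : B.Nonempty) (h : A + B = {v}) :
    ∃ a b, A = {a} ∧ B = {b} ∧ a + b = v := by
  obtain ⟨a0, ha0⟩ := hA
  obtain ⟨b0, hb0⟩ := hB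
  have key : ∀ a ∈ A, ∀ b ∈ B, a + b = v := by
    intro a ha b hb
    have : a + b ∈ A + B := Set.add_mem_add ha hb
    rwa [h, Set.mem_singleton_iff] at this
  refine ⟨a0, b0, ?_, ?_, key a0 ha0 b0 hb0⟩
  · apply Set.Subset.antisymm
    · intro a ha
      have h1 := key a ha b0 hb0
      have h2 := key a0 ha0 b0 hb0
      have : a = a0 := by
        have := h1.trans h2.symm
        exact add_right_cancel this
      simp [this]
    · rintro x rfl; exact ha0
  · apply Set.Subset.antisymm
    · intro b hb
      have h1 := key a0 ha0 b hb
      have h2 := key a0 ha0 b0 hb0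
      have : b = b0 := add_left_cancel (h1.trans h2.symm)
      simp [this]
    · rintro x rfl; exact hb0

theorem faceOf_add_functional {w1 w2 : Fin d → ℝ} {Q : Set (Fin d → ℝ)} {v : Fin d → ℝ}
    (h1 : faceOf w1 Q = {v}) (h2 : faceOf w2 Q = {v}) :
    faceOf (w1 + w2) Q = {v} := by
  have hvQ : v ∈ Q := (faceOf_subset w1 Q) (h1 ▸ rfl)
  have hv1 : ∀ y ∈ Q, dotp w1 y ≤ dotp w1 v := fun y hy =>
    (show v ∈ faceOf w1 Q from h1 ▸ rfl).2 y hy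
  have hv2 : ∀ y ∈ Q, dotp w2 y ≤ dotp w2 v := fun y hy =>
    (show v ∈ faceOf w2 Q from h2 ▸ rfl).2 y hy
  ext x
  constructor
  · rintro ⟨hxQ, hxmax⟩
    have hle := hxmax v hvQ
    rw [dotp_add_left, dotp_add_left] at hle
    have e1 : dotp w1 x = dotp w1 v := le_antisymm (hv1 x hxQ) (by linarith [hv2 x hxQ])
    have hx1 : x ∈ faceOf w1 Q := ⟨hxQ, fun y hy => e1 ▸ hv1 y hy⟩
    rwa [h1] at hx1
  · rintro rfl
    refine ⟨hvQ, fun y hy => ?_⟩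
    rw [dotp_add_left, dotp_add_left]
    exact add_le_add (hv1 y hy) (hv2 y hy)


theorem exists_pos_le_of_pos {α : Type*} (S : Finset α) (f : α → ℝ) (hf : ∀ x ∈ S, 0 < f x) :
    ∃ ε : ℝ, 0 < ε ∧ ∀ x ∈ S, ε ≤ f x := by
  rcases S.eq_empty_or_nonempty with rfl | hS
  · exact ⟨1, one_pos, by simp⟩
  · refine ⟨S.inf' hS f, ?_, fun x hx => Finset.inf'_le f hx⟩
    obtain ⟨x, hx, hfx⟩ := Finset.exists_mem_eq_inf' hS f
    rw [hfx]; exact hf x hx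

/-- Perturbation lemma: for small `ε > 0`, the face in direction `w + ε u` is the
`u`-face of the `w`-face. -/
theorem faceOf_perturb (w u : Fin d → ℝ) (S : Finset (Fin d → ℝ)) (hS : S.Nonempty) :
    ∃ ε0 : ℝ, 0 < ε0 ∧ ∀ ε : ℝ, 0 < ε → ε ≤ ε0 →
      faceOf (w + ε • u) (convexHull ℝ (S : Set (Fin d → ℝ)))
        = faceOf u (faceOf w (convexHull ℝ (S : Set (Fin d → ℝ)))) := by
  classical
  obtain ⟨T, hTne, hTS, hfaceT, hmaxT, hlastT⟩ := faceOf_hull w S hS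
  obtain ⟨T₂, hT2ne, hT2T, hfaceT2, hmaxT2, hlastT2⟩ := faceOf_hull u T hTne
  obtain ⟨z0, hz0⟩ := hT2ne
  have hz0T : z0 ∈ T := hT2T hz0
  have hTvalw : ∀ x ∈ T, dotp w x = dotp w z0 := fun x hx =>
    le_antisymm (hmaxT z0 hz0T x (hTS hx)) (hmaxT x hx z0 (hTS hz0T))
  have hstrict : ∀ x ∈ S, x ∉ T → dotp w x < dotp w z0 := by
    intro x hxS hxT
    rcases lt_or_eq_of_le (hmaxT z0 hz0T x hxS) with h | h
    · exact h
    · exact absurd (hlastT x hxS (fun z hz => h ▸ hmaxT z0 hz0T z hz)) hxT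
  set g : (Fin d → ℝ) → ℝ := fun x => (dotp w z0 - dotp w x) / (1 + |dotp u x - dotp u z0|) with hg
  have hgpos : ∀ x ∈ S.filter (· ∉ T), 0 < g x := by
    intro x hx
    rcases Finset.mem_filter.1 hx with ⟨hxS, hxT⟩
    exact div_pos (sub_pos.2 (hstrict x hxS hxT)) (by positivity)
  obtain ⟨ε0, hε0, hε0le⟩ := exists_pos_le_of_pos _ g hgpos
  refine ⟨ε0, hε0, fun ε hε hεle => ?_⟩
  have hval : ∀ y, dotp (w + ε • u) y = dotp w y + ε * dotp u y := by
    intro y; rw [dotp_add_left, dotp_smul_left]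
  have hsle : ∀ y ∈ S, dotp (w + ε • u) y ≤ dotp (w + ε • u) z0 := by
    intro y hy
    rw [hval, hval]
    by_cases hyT : y ∈ T
    · have h1 := hTvalw y hyT
      have h2 := hmaxT2 z0 hz0 y hyT
      nlinarith
    · have hεg : ε ≤ g y := hεle.trans (hε0le y (Finset.mem_filter.2 ⟨hy, hyT⟩))
      have hD : 0 < dotp w z0 - dotp w y := sub_pos.2 (hstrict y hy hyT)
      have hden : (0:ℝ) < 1 + |dotp u y - dotp u z0| := by positivity
      have h3 : ε * (1 + |dotp u y - dotp u z0|) ≤ dotp w z0 - dotp w y := by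
        rw [hg] at hεg
        calc ε * (1 + |dotp u y - dotp u z0|)
            ≤ (dotp w z0 - dotp w y) / (1 + |dotp u y - dotp u z0|)
              * (1 + |dotp u y - dotp u z0|) := by
              exact mul_le_mul_of_nonneg_right hεg hden.le
          _ = dotp w z0 - dotp w y := div_mul_cancel₀ _ (ne_of_gt hden)
      have h4 : dotp u y - dotp u z0 ≤ |dotp u y - dotp u z0| := le_abs_self _
      nlinarith [abs_nonneg (dotp u y - dotp u z0)]
  have hslt : ∀ y ∈ S, y ∉ T → dotp (w + ε • u) y < dotp (w + ε • u) z0 := by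
    intro y hy hyT
    rw [hval, hval]
    have hεg : ε ≤ g y := hεle.trans (hε0le y (Finset.mem_filter.2 ⟨hy, hyT⟩))
    have hD : 0 < dotp w z0 - dotp w y := sub_pos.2 (hstrict y hy hyT)
    have hden : (0:ℝ) < 1 + |dotp u y - dotp u z0| := by positivity
    have h3 : ε * (1 + |dotp u y - dotp u z0|) ≤ dotp w z0 - dotp w y := by
      rw [hg] at hεg
      calc ε * (1 + |dotp u y - dotp u z0|)
          ≤ (dotp w z0 - dotp w y) / (1 + |dotp u y - dotp u z0|)
            * (1 + |dotp u y - dotp u z0|) :=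
            mul_le_mul_of_nonneg_right hεg hden.le
        _ = dotp w z0 - dotp w y := div_mul_cancel₀ _ (ne_of_gt hden)
    have h4 : dotp u y - dotp u z0 ≤ |dotp u y - dotp u z0| := le_abs_self _
    nlinarith [abs_nonneg (dotp u y - dotp u z0)]
  obtain ⟨T₃, hT3ne, hT3S, hfaceT3, hmaxT3, hlastT3⟩ := faceOf_hull (w + ε • u) S hS
  have hT32 : T₃ = T₂ := by
    apply Finset.ext
    intro x
    constructor
    · intro hxT3
      have hxS : x ∈ S := hT3S hxT3
      have hge : dotp (w + ε • u) z0 ≤ dotp (w + ε • u) x := hmaxT3 x hxT3 z0 (hTS hz0T)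
      by_cases hxT : x ∈ T
      · have hwx : dotp w x = dotp w z0 := hTvalw x hxT
        have hux : dotp u z0 ≤ dotp u x := by
          rw [hval, hval] at hge
          have := hwx
          nlinarith
        exact hlastT2 x hxT (fun z hz => le_trans (hmaxT2 z0 hz0 z hz) hux)
      · exact absurd hge (not_le.2 (hslt x hxS hxT))
    · intro hxT2
      have hxT : x ∈ T := hT2T hxT2
      have hxS : x ∈ S := hTS hxT
      have hwx : dotp w x = dotp w z0 := hTvalw x hxT
      have hux : dotp u x = dotp u z0 :=
        le_antisymm (hmaxT2 z0 hz0 x hxT) (hmaxT2 x hxT2 z0 hz0T)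
      apply hlastT3 x hxS
      intro z hz
      refine le_trans (hsle z hz) (le_of_eq ?_)
      rw [hval, hval, hwx, hux]
  rw [hfaceT3, hT32, hfaceT, hfaceT2]

theorem exists_generic_functional (D : Finset (Fin d → ℝ)) (hD : (0 : Fin d → ℝ) ∉ D) :
    ∃ u : Fin d → ℝ, ∀ z ∈ D, dotp u z ≠ 0 := by
  classical
  induction D using Finset.induction_on with
  | empty => exact ⟨0, by simp⟩
  | @insert z D hzD ih =>
    obtain ⟨u, hu⟩ := ih (fun h => hD (Finset.mem_insert_of_mem h))
    have hz : z ≠ 0 := fun h => hD (h ▸ Finset.mem_insert_self z D)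
    have hzz : 0 < dotp z z := dotp_self_pos hz
    obtain ⟨t, ht⟩ := Infinite.exists_notMem_finset
      ((insert z D).image (fun z' => -(dotp u z') / dotp z z'))
    refine ⟨u + t • z, ?_⟩
    intro z' hz'
    rw [dotp_add_left, dotp_smul_left]
    intro heq
    by_cases h0 : dotp z z' = 0
    · rw [h0, mul_zero, add_zero] at heq
      rcases Finset.mem_insert.1 hz' with rfl | hz'D
      · exact absurd h0 (ne_of_gt hzz)
      · exact hu z' hz'D heq
    · apply ht
      refine Finset.mem_image.2 ⟨z', hz', ?_⟩
      rw [div_eq_iff h0]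
      linarith

theorem exists_generic_on (S : Finset (Fin d → ℝ)) :
    ∃ u, ∀ x ∈ S, ∀ y ∈ S, x ≠ y → dotp u x ≠ dotp u y := by
  classical
  set D := ((S ×ˢ S).filter (fun p => p.1 ≠ p.2)).image (fun p => p.1 - p.2) with hDdef
  have hD : (0:Fin d → ℝ) ∉ D := by
    intro h
    obtain ⟨p, hp, hp0⟩ := Finset.mem_image.1 h
    rcases Finset.mem_filter.1 hp with ⟨-, hne⟩
    exact hne (sub_eq_zero.1 hp0)
  obtain ⟨u, hu⟩ := exists_generic_functional D hD
  refine ⟨u, fun x hx y hy hne heq => ?_⟩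
  have hmem : x - y ∈ D := Finset.mem_image.2
    ⟨(x,y), Finset.mem_filter.2 ⟨Finset.mem_product.2 ⟨hx,hy⟩, hne⟩, rfl⟩
  exact hu _ hmem (by rw [dotp_sub, heq, sub_self])

/-- A finite set on a line has a segment as its convex hull. -/
theorem hull_line_segment (S : Finset (Fin d → ℝ)) (hS : S.Nonempty) (p e : Fin d → ℝ)
    (h : ∀ x ∈ S, ∃ t : ℝ, x = p + t • e) :
    ∃ (a b : Fin d → ℝ) (t : ℝ), a ∈ S ∧ b ∈ S ∧
      convexHull ℝ (S : Set (Fin d → ℝ)) = segment ℝ a b ∧ b - a = t • e := by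
  classical
  set τ : (Fin d → ℝ) → ℝ := fun x => if h : ∃ t : ℝ, x = p + t • e then h.choose else 0 with hτdef
  have hτ : ∀ x ∈ S, x = p + τ x • e := by
    intro x hx
    simp only [hτdef]
    rw [dif_pos (h x hx)]
    exact (h x hx).choose_spec
  set gaff : ℝ →ᵃ[ℝ] (Fin d → ℝ) := AffineMap.lineMap p (p + e) with hgaff
  have hgval : ∀ t : ℝ, gaff t = p + t • e := by
    intro t
    rw [hgaff, AffineMap.lineMap_apply]
    simp [add_sub_cancel_left]
    abel
  set T := S.image τ with hTdef
  have hTne : T.Nonempty := hS.image τ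
  set m := T.min' hTne with hm
  set M := T.max' hTne with hM
  have hmM : m ≤ M := T.min'_le _ (T.max'_mem hTne)
  have hge : ∀ x ∈ S, gaff (τ x) = x := fun x hx => by rw [hgval]; exact (hτ x hx).symm
  have hST : (S : Set (Fin d → ℝ)) = gaff '' (T : Set ℝ) := by
    ext x
    constructor
    · intro hx
      exact ⟨τ x, Finset.mem_coe.2 (Finset.mem_image_of_mem τ hx), hge x hx⟩
    · rintro ⟨t, ht, rfl⟩
      obtain ⟨x, hxS, rfl⟩ := Finset.mem_image.1 (Finset.mem_coe.1 ht)
      rw [hge x hxS]; exact hxS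
  have hhullT : convexHull ℝ (T : Set ℝ) = segment ℝ m M := by
    apply Set.Subset.antisymm
    · rw [segment_eq_Icc hmM]
      exact convexHull_min (fun x hx => ⟨T.min'_le x hx, T.le_max' x hx⟩) (convex_Icc m M)
    · rw [← convexHull_pair]
      apply convexHull_mono
      intro x hx
      rcases hx with rfl | hx
      · exact Finset.mem_coe.2 (T.min'_mem hTne)
      · rcases hx with rfl
        exact Finset.mem_coe.2 (T.max'_mem hTne)
  have hmain : convexHull ℝ (S : Set (Fin d → ℝ)) = segment ℝ (gaff m) (gaff M) := by
    rw [hST, ← AffineMap.image_convexHull gaff (T : Set ℝ), hhullT,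
      image_segment ℝ gaff m M]
  obtain ⟨xm, hxmS, hxm⟩ := Finset.mem_image.1 (T.min'_mem hTne)
  obtain ⟨xM, hxMS, hxM⟩ := Finset.mem_image.1 (T.max'_mem hTne)
  refine ⟨gaff m, gaff M, M - m, ?_, ?_, hmain, ?_⟩
  · rw [show m = τ xm from hm.trans hxm.symm, hge xm hxmS]; exact hxmS
  · rw [show M = τ xM from hM.trans hxM.symm, hge xM hxMS]; exact hxMS
  · rw [hgval, hgval, sub_smul]
    abel


/-- If `mu • P = P' + S`, then two functionals exposing the same vertex of `P` expose the
same vertex of `P'`. -/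
theorem rel_unique {P P' S : Set (Fin d → ℝ)} {V' S0 : Finset (Fin d → ℝ)}
    (hP' : P' = convexHull ℝ (V' : Set (Fin d → ℝ))) (hV'ne : V'.Nonempty)
    (hS : S = convexHull ℝ (S0 : Set (Fin d → ℝ))) (hS0ne : S0.Nonempty)
    {mu : ℝ} (hmu : 0 < mu) (hsum : mu • P = P' + S)
    {v v1' v2' w1 w2 : Fin d → ℝ}
    (h1 : faceOf w1 P = {v}) (h1' : faceOf w1 P' = {v1'})
    (h2 : faceOf w2 P = {v}) (h2' : faceOf w2 P' = {v2'}) :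
    v1' = v2' := by
  have hfS : ∀ w, (faceOf w S).Nonempty := fun w => hS ▸ faceOf_hull_nonempty w S0 hS0ne
  have hkey : ∀ w : Fin d → ℝ, (faceOf w P').Nonempty →
      faceOf w P' + faceOf w S = mu • faceOf w P := by
    intro w hw'
    rw [← faceOf_add w P' S hw' (hfS w), ← hsum, faceOf_smul w hmu P]
  have hne1 : (faceOf w1 P').Nonempty := ⟨v1', h1' ▸ rfl⟩
  have hne2 : (faceOf w2 P').Nonempty := ⟨v2', h2' ▸ rfl⟩
  have hface12 : faceOf (w1 + w2) P = {v} := faceOf_add_functional h1 h2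
  have hne12 : (faceOf (w1 + w2) P').Nonempty :=
    hP' ▸ faceOf_hull_nonempty _ V' hV'ne
  have heq12 : faceOf (w1 + w2) P' + faceOf (w1 + w2) S = {mu • v} := by
    rw [hkey _ hne12, hface12, Set.smul_set_singleton]
  obtain ⟨p', s', hp'face, hs'face, hps⟩ :=
    add_eq_singleton hne12 (hfS (w1 + w2)) heq12
  have hp'mem : p' ∈ faceOf (w1 + w2) P' := hp'face ▸ rfl
  have hs'mem : s' ∈ faceOf (w1 + w2) S := hs'face ▸ rfl
  -- generic step
  have main : ∀ (w : Fin d → ℝ) (vi' : Fin d → ℝ), faceOf w P = {v} → faceOf w P' = {vi'} →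
      p' = vi' := by
    intro w vi' hw hw'
    have hnei : (faceOf w P').Nonempty := ⟨vi', hw' ▸ rfl⟩
    have heqi : faceOf w P' + faceOf w S = {mu • v} := by
      rw [hkey _ hnei, hw, Set.smul_set_singleton]
    obtain ⟨si, hsi⟩ := hfS w
    have hvi'mem : vi' ∈ faceOf w P' := hw' ▸ rfl
    have hvis : vi' + si = mu • v := by
      have : vi' + si ∈ faceOf w P' + faceOf w S := Set.add_mem_add hvi'mem hsi
      rwa [heqi, Set.mem_singleton_iff] at this
    -- compare values
    have hp'P' : p' ∈ P' := faceOf_subset _ _ hp'mem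
    have hs'S : s' ∈ S := faceOf_subset _ _ hs'mem
    have hle1 : dotp w p' ≤ dotp w vi' := hvi'mem.2 p' hp'P'
    have hle2 : dotp w s' ≤ dotp w si := hsi.2 s' hs'S
    have hsumeq : dotp w p' + dotp w s' = dotp w vi' + dotp w si := by
      rw [← dotp_add, ← dotp_add, hps, hvis]
    have heqv : dotp w p' = dotp w vi' := by linarith
    have : p' ∈ faceOf w P' := ⟨hp'P', fun y hy => heqv ▸ hvi'mem.2 y hy⟩
    rwa [hw', Set.mem_singleton_iff] at this
  rw [← main w1 v1' h1 h1', ← main w2 v2' h2 h2']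

/-- Every vertex of `P` is exposed by a functional that also exposes a vertex of `P'`. -/
theorem rel_total {P P' : Set (Fin d → ℝ)} {V V' : Finset (Fin d → ℝ)}
    (hP : P = convexHull ℝ (V : Set (Fin d → ℝ))) (hVne : V.Nonempty)
    (hP' : P' = convexHull ℝ (V' : Set (Fin d → ℝ))) (hV'ne : V'.Nonempty)
    {v : Fin d → ℝ} (hv : IsVertexOf P v) :
    ∃ v' w, faceOf w P = {v} ∧ faceOf w P' = {v'} := by
  obtain ⟨w0, hw0⟩ := hv
  obtain ⟨u, hu⟩ := exists_generic_on V'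
  obtain ⟨ε1, hε1, hf1⟩ := faceOf_perturb w0 u V hVne
  obtain ⟨ε2, hε2, hf2⟩ := faceOf_perturb w0 u V' hV'ne
  set ε := min ε1 ε2 with hεdef
  have hε : 0 < ε := lt_min hε1 hε2
  rw [hP] at hw0
  have e1 : faceOf (w0 + ε • u) P = {v} := by
    rw [hP, hf1 ε hε (min_le_left _ _), hw0, faceOf_singleton]
  have e2 : ∃ v', faceOf (w0 + ε • u) P' = {v'} := by
    rw [hP', hf2 ε hε (min_le_right _ _)]
    obtain ⟨T, hTne, hTS, hface, -, -⟩ := faceOf_hull w0 V' hV'ne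
    rw [hface]
    exact faceOf_hull_injective u T hTne (fun x hx y hy => hu x (hTS hx) y (hTS hy))
  obtain ⟨v', hv'⟩ := e2
  exact ⟨v', w0 + ε • u, e1, hv'⟩

/-- Transport of an oriented edge along a normal equivalence. -/
theorem edge_transport {P P' R S : Set (Fin d → ℝ)} {V V' R0 S0 : Finset (Fin d → ℝ)}
    {c : Fin d → ℝ}
    (hP : P = convexHull ℝ (V : Set (Fin d → ℝ))) (hVne : V.Nonempty)
    (hP' : P' = convexHull ℝ (V' : Set (Fin d → ℝ))) (hV'ne : V'.Nonempty)
    (hR : R = convexHull ℝ (R0 : Set (Fin d → ℝ))) (hR0ne : R0.Nonempty)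
    (hS : S = convexHull ℝ (S0 : Set (Fin d → ℝ))) (hS0ne : S0.Nonempty)
    {lam mu : ℝ} (hlam : 0 < lam) (hmu : 0 < mu)
    (hsum1 : lam • P' = P + R) (hsum2 : mu • P = P' + S)
    (hc' : IsGenericObj P' c)
    {u v : Fin d → ℝ} (hedge : IsEdgeOf P u v) (hlt : dotp c u < dotp c v) :
    ∃ u' v' : Fin d → ℝ, ∃ s : ℝ, s ≠ 0 ∧ v' - u' = s • (v - u) ∧
      IsEdgeOf P' u' v' ∧ dotp c u' < dotp c v' ∧
      (∃ w, faceOf w P = {u} ∧ faceOf w P' = {u'}) ∧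
      (∃ w, faceOf w P = {v} ∧ faceOf w P' = {v'}) := by
  obtain ⟨huv, w, hw⟩ := hedge
  have hfS : (faceOf w S).Nonempty := hS ▸ faceOf_hull_nonempty w S0 hS0ne
  have hfR : (faceOf w R).Nonempty := hR ▸ faceOf_hull_nonempty w R0 hR0ne
  have hfP : (faceOf w P).Nonempty := ⟨v, hw ▸ right_mem_segment ℝ u v⟩
  have hfP' : (faceOf w P').Nonempty := hP' ▸ faceOf_hull_nonempty w V' hV'ne
  obtain ⟨s1, hs1⟩ := hS ▸ faceOf_hull_nonempty w S0 hS0ne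
  -- every element of the `P'`-face lies on the line through `u` in direction `v - u`
  have hline : ∀ x ∈ faceOf w P', ∃ t : ℝ, x = (mu • u - s1) + t • (v - u) := by
    intro x hx
    have hmem : x + s1 ∈ faceOf w P' + faceOf w S := Set.add_mem_add hx hs1
    rw [← faceOf_add w P' S hfP' hfS, ← hsum2, faceOf_smul w hmu P, hw] at hmem
    obtain ⟨y, hy, hxy⟩ := hmem
    rw [segment_eq_image' ℝ u v] at hy
    obtain ⟨θ, -, rfl⟩ := hy
    refine ⟨mu * θ, ?_⟩
    have hx' : x = mu • (u + θ • (v - u)) - s1 := eq_sub_of_add_eq hxy.symm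
    rw [hx', smul_add, smul_smul]
    abel
  obtain ⟨T', hT'ne, hT'V', hfaceT', -, -⟩ := faceOf_hull w V' hV'ne
  have hFT' : faceOf w P' = convexHull ℝ (T' : Set (Fin d → ℝ)) := by
    rw [hP']; exact hfaceT'
  have hlineT' : ∀ x ∈ T', ∃ t : ℝ, x = (mu • u - s1) + t • (v - u) := by
    intro x hx
    exact hline x (hFT' ▸ subset_convexHull ℝ _ (Finset.mem_coe.2 hx))
  obtain ⟨a, b, t, haT', hbT', hhullseg, hba⟩ := hull_line_segment T' hT'ne _ _ hlineT'
  have hFseg : faceOf w P' = segment ℝ a b := by rw [hFT', hhullseg]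
  have hab : a ≠ b := by
    rintro rfl
    have heq : lam • faceOf w P' = faceOf w P + faceOf w R := by
      rw [← faceOf_smul w hlam P', hsum1, faceOf_add w P R hfP hfR]
    rw [hFseg, segment_same, Set.smul_set_singleton, hw] at heq
    obtain ⟨p0, r0, hseg, -, -⟩ := add_eq_singleton ⟨v, right_mem_segment ℝ u v⟩ hfR heq.symm
    have hu0 : u ∈ ({p0} : Set (Fin d → ℝ)) := hseg ▸ left_mem_segment ℝ u v
    have hv0 : v ∈ ({p0} : Set (Fin d → ℝ)) := hseg ▸ right_mem_segment ℝ u v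
    exact huv ((Set.eq_of_mem_singleton hu0).trans (Set.eq_of_mem_singleton hv0).symm)
  have ht0 : t ≠ 0 := by
    rintro rfl
    rw [zero_smul, sub_eq_zero] at hba
    exact hab hba.symm
  have hedge' : IsEdgeOf P' a b := ⟨hab, w, hFseg⟩
  have hcab : dotp c a ≠ dotp c b := hc' a b hedge'
  obtain ⟨ε1, hε1, hf1⟩ := faceOf_perturb w c V hVne
  obtain ⟨ε2, hε2, hf2⟩ := faceOf_perturb w c V' hV'ne
  obtain ⟨ε3, hε3, hf3⟩ := faceOf_perturb w (-c) V hVne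
  obtain ⟨ε4, hε4, hf4⟩ := faceOf_perturb w (-c) V' hV'ne
  set εa := min ε1 ε2 with hεadef
  set εb := min ε3 ε4 with hεbdef
  have hεa : 0 < εa := lt_min hε1 hε2
  have hεb : 0 < εb := lt_min hε3 hε4
  have hwP : faceOf w (convexHull ℝ (V : Set (Fin d → ℝ))) = segment ℝ u v := by
    rw [← hP]; exact hw
  have hwP' : faceOf w (convexHull ℝ (V' : Set (Fin d → ℝ))) = segment ℝ a b := by
    rw [← hP']; exact hFseg
  have hnegc : dotp (-c) v < dotp (-c) u := by
    rw [dotp_neg_left, dotp_neg_left]; linarith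
  have eva : faceOf (w + εa • c) P = {v} := by
    rw [hP, hf1 εa hεa (min_le_left _ _), hwP, faceOf_segment hlt]
  have eua : faceOf (w + εb • (-c)) P = {u} := by
    rw [hP, hf3 εb hεb (min_le_left _ _), hwP, segment_symm, faceOf_segment hnegc]
  rcases lt_or_gt_of_ne hcab with hab' | hab'
  · -- a is the c-min endpoint
    have ev'a : faceOf (w + εa • c) P' = {b} := by
      rw [hP', hf2 εa hεa (min_le_right _ _), hwP', faceOf_segment hab']
    have hnegc' : dotp (-c) b < dotp (-c) a := by
      rw [dotp_neg_left, dotp_neg_left]; linarith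
    have eu'a : faceOf (w + εb • (-c)) P' = {a} := by
      rw [hP', hf4 εb hεb (min_le_right _ _), hwP', segment_symm, faceOf_segment hnegc']
    exact ⟨a, b, t, ht0, hba, hedge', hab',
      ⟨w + εb • (-c), eua, eu'a⟩, ⟨w + εa • c, eva, ev'a⟩⟩
  · -- b is the c-min endpoint
    have hedge'' : IsEdgeOf P' b a := ⟨fun h => hab h.symm, w, by rw [hFseg, segment_symm]⟩
    have ev'a : faceOf (w + εa • c) P' = {a} := by
      rw [hP', hf2 εa hεa (min_le_right _ _), hwP', segment_symm, faceOf_segment hab']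
    have hnegc' : dotp (-c) a < dotp (-c) b := by
      rw [dotp_neg_left, dotp_neg_left]; linarith
    have eu'a : faceOf (w + εb • (-c)) P' = {b} := by
      rw [hP', hf4 εb hεb (min_le_right _ _), hwP', faceOf_segment hnegc']
    refine ⟨b, a, -t, neg_ne_zero.2 ht0, ?_, hedge'', hab',
      ⟨w + εb • (-c), eua, eu'a⟩, ⟨w + εa • c, eva, ev'a⟩⟩
    rw [neg_smul, ← hba, neg_sub]


/-- One-sided inclusion of the sets of `Ψ`-points. -/
theorem psi_subset {P P' : Set (Fin d → ℝ)} {V V' : Finset (Fin d → ℝ)}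
    (hP : P = convexHull ℝ (V : Set (Fin d → ℝ)))
    (hV : ∀ v, v ∈ V ↔ IsVertexOf P v)
    (hP' : P' = convexHull ℝ (V' : Set (Fin d → ℝ)))
    (hV' : ∀ v, v ∈ V' ↔ IsVertexOf P' v)
    (c : Fin d → ℝ) (hc : IsGenericObj P c) (hc' : IsGenericObj P' c)
    (vopt : Fin d → ℝ) (hopt : faceOf c P = {vopt})
    (vopt' : Fin d → ℝ) (hopt' : faceOf c P' = {vopt'})
    (hNE : NormallyEquiv P P') :
    {p | ∃ A, IsArbor P c vopt A ∧ p = PsiPt V (fun x => dotp c x) A} ⊆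
      {p | ∃ A', IsArbor P' c vopt' A' ∧ p = PsiPt V' (fun x => dotp c x) A'} := by
  classical
  obtain ⟨⟨lam, R, hlam, ⟨R0, hR0ne, hR⟩, hsum1⟩, ⟨mu, S, hmu, ⟨S0, hS0ne, hS⟩, hsum2⟩⟩ := hNE
  have hoptvert : IsVertexOf P vopt := ⟨c, hopt⟩
  have hoptvert' : IsVertexOf P' vopt' := ⟨c, hopt'⟩
  have hVne : V.Nonempty := ⟨vopt, (hV vopt).2 hoptvert⟩
  have hV'ne : V'.Nonempty := ⟨vopt', (hV' vopt').2 hoptvert'⟩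
  -- the vertex relation
  set Rel : (Fin d → ℝ) → (Fin d → ℝ) → Prop :=
    fun v v' => ∃ w, faceOf w P = {v} ∧ faceOf w P' = {v'} with hRel
  have hRfun : ∀ {v v1' v2'}, Rel v v1' → Rel v v2' → v1' = v2' := by
    rintro v v1' v2' ⟨w1, h1, h1'⟩ ⟨w2, h2, h2'⟩
    exact rel_unique hP' hV'ne hS hS0ne hmu hsum2 h1 h1' h2 h2'
  have hRfun' : ∀ {v1 v2 v'}, Rel v1 v' → Rel v2 v' → v1 = v2 := by
    rintro v1 v2 v' ⟨w1, h1, h1'⟩ ⟨w2, h2, h2'⟩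
    exact rel_unique hP hVne hR hR0ne hlam hsum1 h1' h1 h2' h2
  set φ : (Fin d → ℝ) → (Fin d → ℝ) :=
    fun v => if h : ∃ v', Rel v v' then h.choose else v with hφdef
  set ψ : (Fin d → ℝ) → (Fin d → ℝ) :=
    fun v' => if h : ∃ v, Rel v v' then h.choose else v' with hψdef
  have hφ : ∀ {v v'}, Rel v v' → φ v = v' := by
    intro v v' h
    have hex : ∃ x, Rel v x := ⟨v', h⟩
    have : φ v = hex.choose := by rw [hφdef]; exact dif_pos hex
    rw [this]
    exact hRfun hex.choose_spec h
  have hψ : ∀ {v v'}, Rel v v' → ψ v' = v := by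
    intro v v' h
    have hex : ∃ x, Rel x v' := ⟨v, h⟩
    have : ψ v' = hex.choose := by rw [hψdef]; exact dif_pos hex
    rw [this]
    exact hRfun' hex.choose_spec h
  have hRtotal : ∀ v, IsVertexOf P v → Rel v (φ v) := by
    intro v hv
    obtain ⟨v', w, h1, h2⟩ := rel_total hP hVne hP' hV'ne hv
    have hr : Rel v v' := ⟨w, h1, h2⟩
    rw [hφ hr]; exact hr
  have hRtotal' : ∀ v', IsVertexOf P' v' → Rel (ψ v') v' := by
    intro v' hv'
    obtain ⟨vv, w, h1, h2⟩ := rel_total hP' hV'ne hP hVne hv'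
    have hr : Rel vv v' := ⟨w, h2, h1⟩
    rw [hψ hr]; exact hr
  have hRvert : ∀ {v v'}, Rel v v' → IsVertexOf P v := fun ⟨w, h1, _⟩ => ⟨w, h1⟩
  have hRvert' : ∀ {v v'}, Rel v v' → IsVertexOf P' v' := fun ⟨w, _, h2⟩ => ⟨w, h2⟩
  have hoptRel : Rel vopt vopt' := ⟨c, hopt, hopt'⟩
  -- transport one arborescence
  rintro p ⟨A, ⟨hA1, hA2⟩, rfl⟩
  have key : ∀ v', IsVertexOf P' v' → v' ≠ vopt' →
      IsEdgeOf P' v' (φ (A (ψ v'))) ∧ dotp c v' < dotp c (φ (A (ψ v'))) ∧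
      ∃ s : ℝ, s ≠ 0 ∧ φ (A (ψ v')) - v' = s • (A (ψ v') - ψ v') := by
    intro v' hv' hne'
    have hrel : Rel (ψ v') v' := hRtotal' v' hv'
    set v0 := ψ v'
    have hv0vert : IsVertexOf P v0 := hRvert hrel
    have hv0ne : v0 ≠ vopt := by
      rintro h
      rw [h] at hrel
      exact hne' (hRfun hrel hoptRel)
    obtain ⟨hedge, himp⟩ := hA2 v0 hv0vert hv0ne
    obtain ⟨a', b', s, hs0, hsub, hedge', hlt', hru, hrv⟩ :=
      edge_transport hP hVne hP' hV'ne hR hR0ne hS hS0ne hlam hmu hsum1 hsum2 hc'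
        hedge himp
    have hreq : a' = v' := hRfun hru hrel
    have hbeq : φ (A v0) = b' := hφ hrv
    rw [hreq] at hedge' hlt' hsub
    rw [← hbeq] at hedge' hlt' hsub
    exact ⟨hedge', hlt', s, hs0, hsub⟩
  set A' : (Fin d → ℝ) → (Fin d → ℝ) :=
    fun x => if x = vopt' then vopt' else φ (A (ψ x)) with hA'def
  have hA'opt : A' vopt' = vopt' := by rw [hA'def]; exact if_pos rfl
  have hA'ne : ∀ v', v' ≠ vopt' → A' v' = φ (A (ψ v')) := by
    intro v' h; rw [hA'def]; exact if_neg h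
  have hArb' : IsArbor P' c vopt' A' := by
    constructor
    · intro v' hv'
      constructor
      · intro h
        by_contra hne
        obtain ⟨-, hlt', -⟩ := key v' hv' hne
        rw [← hA'ne v' hne, h] at hlt'
        exact lt_irrefl _ hlt'
      · rintro rfl; exact hA'opt
    · intro v' hv' hne
      obtain ⟨hedge', hlt', -⟩ := key v' hv' hne
      rw [hA'ne v' hne]
      exact ⟨hedge', hlt'⟩
  refine ⟨A', hArb', ?_⟩
  -- equality of the Ψ points
  have hAopt : A vopt = vopt := (hA1 vopt hoptvert).2 rfl
  show PsiPt V (fun x => dotp c x) A = PsiPt V' (fun x => dotp c x) A'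
  rw [PsiPt, PsiPt]
  refine Finset.sum_nbij' (fun v => φ v) (fun v' => ψ v') ?_ ?_ ?_ ?_ ?_
  · intro v hv
    exact (hV' _).2 (hRvert' (hRtotal v ((hV v).1 hv)))
  · intro v' hv'
    exact (hV _).2 (hRvert (hRtotal' v' ((hV' v').1 hv')))
  · intro v hv
    exact hψ (hRtotal v ((hV v).1 hv))
  · intro v' hv'
    exact hφ (hRtotal' v' ((hV' v').1 hv'))
  · intro v hv
    beta_reduce
    have hvvert : IsVertexOf P v := (hV v).1 hv
    have hrel : Rel v (φ v) := hRtotal v hvvert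
    by_cases hvo : v = vopt
    · have hφv : φ v = vopt' := by rw [hvo]; exact hφ hoptRel
      rw [hφv, hA'opt, hvo, hAopt]
      simp
    · have hφne : φ v ≠ vopt' := by
        intro h
        exact hvo (hRfun' (h ▸ hrel) hoptRel)
      have hv'vert : IsVertexOf P' (φ v) := hRvert' hrel
      obtain ⟨-, hlt', s, hs0, hsub⟩ := key (φ v) hv'vert hφne
      have hψφ : ψ (φ v) = v := hψ hrel
      rw [hψφ] at hsub hlt'
      have hAval : A' (φ v) = φ (A v) := by rw [hA'ne _ hφne, hψφ]
      obtain ⟨-, himp⟩ := hA2 v hvvert hvo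
      have hD : dotp c (A v - v) ≠ 0 := by
        rw [dotp_sub]; exact ne_of_gt (sub_pos.2 himp)
      rw [hAval, hsub, dotp_smul, mul_inv_rev, smul_smul, mul_assoc,
        inv_mul_cancel₀ hs0, mul_one]
  
end PvtAux

/-- Theorem: normally equivalent polytopes have the same max-slope pivot
rule polytope. -/
theorem statement12 {d : ℕ} (P P' : Set (Fin d → ℝ)) (V V' : Finset (Fin d → ℝ))
    (hP : P = convexHull ℝ (V : Set (Fin d → ℝ)))
    (hV : ∀ v, v ∈ V ↔ IsVertexOf P v)
    (hP' : P' = convexHull ℝ (V' : Set (Fin d → ℝ)))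
    (hV' : ∀ v, v ∈ V' ↔ IsVertexOf P' v)
    (c : Fin d → ℝ) (hc : IsGenericObj P c) (hc' : IsGenericObj P' c)
    (vopt : Fin d → ℝ) (hopt : faceOf c P = {vopt})
    (vopt' : Fin d → ℝ) (hopt' : faceOf c P' = {vopt'})
    (hNE : NormallyEquiv P P') :
    pivotPolytope P V c vopt (fun x => dotp c x) =
      pivotPolytope P' V' c vopt' (fun x => dotp c x) := by
  have h12 := PvtAux.psi_subset hP hV hP' hV' c hc hc' vopt hopt vopt' hopt' hNE
  have h21 := PvtAux.psi_subset hP' hV' hP hV c hc' hc vopt' hopt' vopt hopt ⟨hNE.2, hNE.1⟩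
  unfold pivotPolytope
  exact congrArg _ (Set.Subset.antisymm h12 h21)
end

section
/- Let G = (V,E) be a finite simple undirected graph. Then the map B ↦ δ̄(B) sending a branching to its reduced in-degree sequence restricts to a bijection between the greedy branchings of G and the vertices of the graphical neighbotope N(G). -/
/-- `B` is a branching of the graph `G`: each node maps to itself or a neighbor, and
iteration eventually stabilizes. -/
def IsBranching {V : Type*} (G : SimpleGraph V) (B : V → V) : Prop :=
  (∀ v, B v = v ∨ G.Adj v (B v)) ∧ ∀ v, ∃ k : ℕ, B^[k + 1] v = B^[k] v

/-- The reduced in-degree sequence `δ̄(B)` of a branching `B`. -/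
noncomputable def redInDeg {V : Type*} [Fintype V] [DecidableEq V] (B : V → V) : V → ℝ :=
  fun v => ((Finset.univ.filter fun u => B u = v).card : ℝ) - 1

/-- The graphical neighbotope `N(G)`. -/
noncomputable def graphNeighbotope {V : Type*} [Fintype V] [DecidableEq V]
    (G : SimpleGraph V) : Set (V → ℝ) :=
  convexHull ℝ {x | ∃ B, IsBranching G B ∧ x = redInDeg B}

/-- `B` is a greedy branching: it is the argmax branching of some generic node potentials. -/
def IsGreedyBranching {V : Type*} (G : SimpleGraph V) (B : V → V) : Prop :=
  IsBranching G B ∧ ∃ c : V → ℝ,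
    (∀ v u u', (u = v ∨ G.Adj v u) → (u' = v ∨ G.Adj v u') → u ≠ u' → c u ≠ c u') ∧
    ∀ v u, (u = v ∨ G.Adj v u) → u ≠ B v → c u - c v < c (B v) - c v

/-- Dot product on `V → ℝ`. -/
def dotV {V : Type*} [Fintype V] (c x : V → ℝ) : ℝ := ∑ v, c v * x v

/-- The face of `Q ⊆ ℝ^V` maximizing `c`. -/
def faceOfV {V : Type*} [Fintype V] (c : V → ℝ) (Q : Set (V → ℝ)) : Set (V → ℝ) :=
  {x | x ∈ Q ∧ ∀ y ∈ Q, dotV c y ≤ dotV c x}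

/-- `x` is a vertex of `Q ⊆ ℝ^V`. -/
def IsVertexOfV {V : Type*} [Fintype V] (Q : Set (V → ℝ)) (x : V → ℝ) : Prop :=
  ∃ c, faceOfV c Q = {x}


set_option linter.unusedSectionVars false
set_option maxHeartbeats 1000000

section Aux
variable {V : Type*} [Fintype V] [DecidableEq V]

lemma isLinearMap_dotV (c : V → ℝ) : IsLinearMap ℝ (dotV c) := by
  constructor
  · intro x y; simp [dotV, mul_add, Finset.sum_add_distrib]
  · intro r x
    simp only [dotV, Pi.smul_apply, smul_eq_mul, Finset.mul_sum]
    exact Finset.sum_congr rfl fun v _ => by ring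

lemma dotV_redInDeg (c : V → ℝ) (B : V → V) :
    dotV c (redInDeg B) = ∑ v, (c (B v) - c v) := by
  have h1 : ∑ v, c v * ((Finset.univ.filter fun u => B u = v).card : ℝ)
      = ∑ v, c (B v) := by
    rw [← Finset.sum_fiberwise Finset.univ B (fun u => c (B u))]
    refine Finset.sum_congr rfl fun v _ => ?_
    rw [Finset.sum_congr rfl (fun u hu => ?_), Finset.sum_const, nsmul_eq_mul, mul_comm]
    rw [(Finset.mem_filter.mp hu).2]
  simp only [dotV, redInDeg, mul_sub, mul_one, Finset.sum_sub_distrib, h1]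

end Aux

section Aux2
variable {V : Type*} [Fintype V] [DecidableEq V] {G : SimpleGraph V}

/-- Greedy dominance: the greedy branching (w.r.t. `c`) weakly dominates any branching. -/
lemma greedy_le {B B' : V → V} (c : V → ℝ)
    (hstr : ∀ v u, (u = v ∨ G.Adj v u) → u ≠ B v → c u - c v < c (B v) - c v)
    (hB' : IsBranching G B') :
    dotV c (redInDeg B') ≤ dotV c (redInDeg B) := by
  rw [dotV_redInDeg, dotV_redInDeg]
  refine Finset.sum_le_sum fun v _ => ?_
  by_cases h : B' v = B v
  · rw [h]
  · exact le_of_lt (hstr v (B' v) ((hB'.1 v).imp_right (fun a => a)) h)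

lemma greedy_lt {B B' : V → V} (c : V → ℝ)
    (hstr : ∀ v u, (u = v ∨ G.Adj v u) → u ≠ B v → c u - c v < c (B v) - c v)
    (hB' : IsBranching G B') (hne : B' ≠ B) :
    dotV c (redInDeg B') < dotV c (redInDeg B) := by
  rw [dotV_redInDeg, dotV_redInDeg]
  obtain ⟨v₀, hv₀⟩ := Function.ne_iff.mp hne
  refine Finset.sum_lt_sum (fun v _ => ?_) ⟨v₀, Finset.mem_univ _, ?_⟩
  · by_cases h : B' v = B v
    · rw [h]
    · exact le_of_lt (hstr v (B' v) ((hB'.1 v).imp_right (fun a => a)) h)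
  · exact hstr v₀ (B' v₀) ((hB'.1 v₀).imp_right (fun a => a)) hv₀

/-- Max principle over a convex hull. -/
lemma dotV_le_of_mem_hull {S : Set (V → ℝ)} {c : V → ℝ} {M : ℝ}
    (hS : ∀ s ∈ S, dotV c s ≤ M) {y : V → ℝ} (hy : y ∈ convexHull ℝ S) :
    dotV c y ≤ M :=
  convexHull_min hS (convex_halfSpace_le (isLinearMap_dotV c) M) hy

/-- Uniqueness of the maximizer over a convex hull with strict gaps. -/
lemma eq_of_mem_hull_max {S : Set (V → ℝ)} {c : V → ℝ} {s₀ y : V → ℝ}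
    (hlt : ∀ s ∈ S, s ≠ s₀ → dotV c s < dotV c s₀)
    (hy : y ∈ convexHull ℝ S) (hge : dotV c s₀ ≤ dotV c y) : y = s₀ := by
  have hle : ∀ s ∈ S, dotV c s ≤ dotV c s₀ := by
    intro s hs
    by_cases h : s = s₀
    · rw [h]
    · exact le_of_lt (hlt s hs h)
  rw [convexHull_eq] at hy
  obtain ⟨ι, t, w, z, hw0, hw1, hzS, hcm⟩ := hy
  rw [Finset.centerMass_eq_of_sum_1 t z hw1] at hcm
  have L := isLinearMap_dotV (V := V) c
  have hdots : dotV c y = ∑ i ∈ t, w i * dotV c (z i) := by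
    rw [← hcm]
    have : dotV c (∑ i ∈ t, w i • z i) = (IsLinearMap.mk' (dotV c) L) (∑ i ∈ t, w i • z i) := rfl
    rw [this, map_sum]
    exact Finset.sum_congr rfl fun i _ => by rw [map_smul]; simp
  have hall : ∀ i ∈ t, w i ≠ 0 → z i = s₀ := by
    by_contra hcon
    push_neg at hcon
    obtain ⟨i₀, hi₀t, hwi₀, hzi₀⟩ := hcon
    have : dotV c y < ∑ i ∈ t, w i * dotV c s₀ := by
      rw [hdots]
      refine Finset.sum_lt_sum (fun i hi => ?_) ⟨i₀, hi₀t, ?_⟩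
      · exact mul_le_mul_of_nonneg_left (hle (z i) (hzS i hi)) (hw0 i hi)
      · exact mul_lt_mul_of_pos_left (hlt _ (hzS i₀ hi₀t) hzi₀)
          (lt_of_le_of_ne (hw0 i₀ hi₀t) (Ne.symm hwi₀))
    rw [← Finset.sum_mul, hw1, one_mul] at this
    exact absurd hge (not_le.mpr this)
  apply le_antisymm at hge
  · rw [← hcm]
    have : ∀ i ∈ t, w i • z i = w i • s₀ := by
      intro i hi
      by_cases h : w i = 0
      · simp [h]
      · rw [hall i hi h]
    rw [Finset.sum_congr rfl this, ← Finset.sum_smul, hw1, one_smul]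

end Aux2

section Aux3
variable {V : Type*} [Fintype V] [DecidableEq V] {G : SimpleGraph V}

/-- Existence of the greedy branching for generic node potentials. -/
lemma exists_greedy (G : SimpleGraph V) (c : V → ℝ)
    (hgen : ∀ v u u', (u = v ∨ G.Adj v u) → (u' = v ∨ G.Adj v u') → u ≠ u' → c u ≠ c u') :
    ∃ B : V → V, IsBranching G B ∧
      ∀ v u, (u = v ∨ G.Adj v u) → u ≠ B v → c u - c v < c (B v) - c v := by
  have hmax : ∀ v : V, ∃ u, (u = v ∨ G.Adj v u) ∧ ∀ u', (u' = v ∨ G.Adj v u') → c u' ≤ c u := by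
    intro v
    have hfin : {u | u = v ∨ G.Adj v u}.Finite := Set.toFinite _
    obtain ⟨u, hu, hmax⟩ := Finset.exists_max_image hfin.toFinset c
      ⟨v, hfin.mem_toFinset.mpr (Or.inl rfl)⟩
    exact ⟨u, hfin.mem_toFinset.mp hu, fun u' hu' => hmax u' (hfin.mem_toFinset.mpr hu')⟩
  choose B hB hBmax using hmax
  have hstr : ∀ v u, (u = v ∨ G.Adj v u) → u ≠ B v → c u - c v < c (B v) - c v := by
    intro v u hu hne
    have h1 : c u ≤ c (B v) := hBmax v u hu
    have h2 : c u ≠ c (B v) := hgen v u (B v) hu (hB v) hne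
    linarith [lt_of_le_of_ne h1 h2]
  refine ⟨B, ⟨hB, fun v => ?_⟩, hstr⟩
  -- stabilization
  by_contra hcon
  push_neg at hcon
  have hmono : ∀ k : ℕ, c (B^[k] v) < c (B^[k + 1] v) := by
    intro k
    have hne : B^[k + 1] v ≠ B^[k] v := hcon k
    rw [Function.iterate_succ_apply'] at hne ⊢
    have := hstr (B^[k] v) (B^[k] v) (Or.inl rfl) (Ne.symm hne)
    linarith
  have hsm : StrictMono fun k => c (B^[k] v) := strictMono_nat_of_lt_succ hmono
  obtain ⟨a, b, hab, heq⟩ := Finite.exists_ne_map_eq_of_infinite fun k : ℕ => B^[k] v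
  exact hab (hsm.injective (by simp only [heq]))

/-- The set of reduced in-degree sequences of branchings. -/
lemma mem_neighbotope_of_branching {B : V → V} (hB : IsBranching G B) :
    redInDeg B ∈ graphNeighbotope G :=
  subset_convexHull ℝ _ ⟨B, hB, rfl⟩

/-- For a greedy branching `B` with potentials `c`, the face of `N(G)` in direction `c`
is exactly `{redInDeg B}`. -/
lemma face_eq_singleton {B : V → V} (hB : IsBranching G B) (c : V → ℝ)
    (hstr : ∀ v u, (u = v ∨ G.Adj v u) → u ≠ B v → c u - c v < c (B v) - c v) :
    faceOfV c (graphNeighbotope G) = {redInDeg B} := by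
  have hle : ∀ s ∈ {x | ∃ B', IsBranching G B' ∧ x = redInDeg B'}, dotV c s ≤ dotV c (redInDeg B) := by
    rintro s ⟨B', hB', rfl⟩
    exact greedy_le c hstr hB'
  have hlt : ∀ s ∈ {x | ∃ B', IsBranching G B' ∧ x = redInDeg B'},
      s ≠ redInDeg B → dotV c s < dotV c (redInDeg B) := by
    rintro s ⟨B', hB', rfl⟩ hne
    refine greedy_lt c hstr hB' fun h => hne (by rw [h])
  ext y
  simp only [faceOfV, Set.mem_setOf_eq, Set.mem_singleton_iff]
  constructor
  · rintro ⟨hyQ, hymax⟩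
    exact eq_of_mem_hull_max hlt hyQ (hymax _ (mem_neighbotope_of_branching hB))
  · rintro rfl
    exact ⟨mem_neighbotope_of_branching hB, fun y hy => dotV_le_of_mem_hull hle hy⟩

/-- Choosing a uniform small epsilon. -/
lemma exists_pos_eps {ι : Type*} (F : Finset ι) (a b : ι → ℝ) (ha : ∀ i ∈ F, 0 < a i) :
    ∃ ε : ℝ, 0 < ε ∧ ∀ i ∈ F, ε * |b i| < a i := by
  classical
  set T : Finset ℝ := insert 1 (F.image fun i => a i / (|b i| + 1)) with hT
  have hne : T.Nonempty := ⟨1, Finset.mem_insert_self _ _⟩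
  refine ⟨T.min' hne, ?_, ?_⟩
  · have hpos : ∀ x ∈ T, 0 < x := by
      intro x hx
      simp only [hT, Finset.mem_insert, Finset.mem_image] at hx
      rcases hx with h | ⟨i, hi, hi2⟩
      · rw [h]; norm_num
      · rw [← hi2]
        exact div_pos (ha i hi) (by positivity)
    exact hpos _ (T.min'_mem hne)
  · intro i hi
    have hmin : T.min' hne ≤ a i / (|b i| + 1) :=
      Finset.min'_le _ _ (Finset.mem_insert_of_mem (Finset.mem_image_of_mem _ hi))
    calc T.min' hne * |b i| ≤ (a i / (|b i| + 1)) * |b i| :=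
          mul_le_mul_of_nonneg_right hmin (abs_nonneg _)
      _ < a i := by
          rw [div_mul_eq_mul_div, div_lt_iff₀ (by positivity)]
          have := abs_nonneg (b i)
          nlinarith [ha i hi]

end Aux3

section Aux4
variable {V : Type*} [Fintype V] [DecidableEq V] {G : SimpleGraph V}

lemma dotV_add_smul (c d : V → ℝ) (ε : ℝ) (y : V → ℝ) :
    dotV (fun v => c v + ε * d v) y = dotV c y + ε * dotV d y := by
  simp only [dotV, add_mul, Finset.sum_add_distrib, Finset.mul_sum, mul_assoc]

end Aux4

/-- Theorem: `B ↦ δ̄(B)` is a bijection between greedy branchings of `G`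
and the vertices of the graphical neighbotope `N(G)`. -/
theorem statement17 {V : Type*} [Fintype V] [DecidableEq V] (G : SimpleGraph V) :
    Set.BijOn (fun B : V → V => redInDeg B)
      {B | IsGreedyBranching G B}
      {x | IsVertexOfV (graphNeighbotope G) x} := by
  classical
  refine ⟨?_, ?_, ?_⟩
  · -- MapsTo
    rintro B ⟨hBbr, c, hgen, hstr⟩
    exact ⟨c, face_eq_singleton hBbr c hstr⟩
  · -- InjOn
    rintro B ⟨hBbr, c, hgen, hstr⟩ B' hB' heq
    by_contra hne
    have hlt := greedy_lt c hstr hB'.1 (Ne.symm hne)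
    rw [show redInDeg B = redInDeg B' from heq] at hlt
    exact lt_irrefl _ hlt
  · -- SurjOn
    rintro x ⟨c, hface⟩
    have hxf : x ∈ faceOfV c (graphNeighbotope G) := by rw [hface]; rfl
    obtain ⟨hxQ, hxmax⟩ := hxf
    set S : Set (V → ℝ) := {x | ∃ B, IsBranching G B ∧ x = redInDeg B} with hS
    have hSfin : S.Finite := by
      refine (Set.finite_range (fun B : V → V => redInDeg B)).subset ?_
      rintro _ ⟨B, _, rfl⟩; exact ⟨B, rfl⟩
    set T := hSfin.toFinset with hT
    set d : V → ℝ := fun v => ((Fintype.equivFin V) v : ℕ) with hd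
    have hdinj : Function.Injective d := by
      intro u u' h
      exact (Fintype.equivFin V).injective (Fin.ext (Nat.cast_injective h))
    -- choose epsilon
    set F : Finset ((V × V) ⊕ (V → ℝ)) :=
      Finset.disjSum (Finset.univ.filter fun p : V × V => c p.1 ≠ c p.2)
        (T.filter fun s => dotV c s < dotV c x) with hF
    set a : ((V × V) ⊕ (V → ℝ)) → ℝ :=
      Sum.elim (fun p => |c p.1 - c p.2|) (fun s => dotV c x - dotV c s) with ha'
    set b : ((V × V) ⊕ (V → ℝ)) → ℝ :=
      Sum.elim (fun p => d p.1 - d p.2) (fun s => dotV d s - dotV d x) with hb'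
    have ha : ∀ i ∈ F, 0 < a i := by
      rintro (p | s) hi
      · rw [hF, Finset.inl_mem_disjSum, Finset.mem_filter] at hi
        exact abs_pos.mpr (sub_ne_zero.mpr hi.2)
      · rw [hF, Finset.inr_mem_disjSum, Finset.mem_filter] at hi
        simpa [ha'] using hi.2
    obtain ⟨ε, hε, hεlt⟩ := exists_pos_eps F a b ha
    set c' : V → ℝ := fun v => c v + ε * d v with hc'
    have hgen' : ∀ u u', u ≠ u' → c' u ≠ c' u' := by
      intro u u' hne heq
      by_cases h : c u = c u'
      · have : d u = d u' := by
          have h2 : ε * d u = ε * d u' := by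
            simp only [hc'] at heq; linarith
          exact mul_left_cancel₀ (ne_of_gt hε) h2
        exact hne (hdinj this)
      · have hmem : Sum.inl (u, u') ∈ F := by
          rw [hF, Finset.inl_mem_disjSum, Finset.mem_filter]
          exact ⟨Finset.mem_univ _, h⟩
        have hb1 := hεlt _ hmem
        simp only [ha', hb', Sum.elim_inl] at hb1
        have heq2 : c u - c u' = ε * (d u' - d u) := by
          simp only [hc'] at heq; linarith
        have : |c u - c u'| = ε * |d u - d u'| := by
          rw [heq2, abs_mul, abs_of_pos hε, abs_sub_comm]
        linarith
    obtain ⟨B, hBbr, hBstr⟩ := exists_greedy G c' (fun v u u' _ _ hne => hgen' u u' hne)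
    have hmemS : redInDeg B ∈ S := ⟨B, hBbr, rfl⟩
    have hBQ : redInDeg B ∈ graphNeighbotope G := subset_convexHull ℝ _ hmemS
    have hled : dotV c (redInDeg B) ≤ dotV c x := hxmax _ hBQ
    have hkey : dotV c (redInDeg B) = dotV c x := by
      by_contra hne
      have hlt : dotV c (redInDeg B) < dotV c x := lt_of_le_of_ne hled hne
      have hmem : Sum.inr (redInDeg B) ∈ F := by
        rw [hF, Finset.inr_mem_disjSum, Finset.mem_filter]
        exact ⟨hSfin.mem_toFinset.mpr hmemS, hlt⟩
      have hb1 := hεlt _ hmem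
      simp only [ha', hb', Sum.elim_inr] at hb1
      have hmax' : dotV c' x ≤ dotV c' (redInDeg B) := by
        refine dotV_le_of_mem_hull (S := S) ?_ hxQ
        rintro s ⟨B', hB', rfl⟩
        exact greedy_le c' hBstr hB'
      rw [dotV_add_smul, dotV_add_smul] at hmax'
      have hble : ε * (dotV d (redInDeg B) - dotV d x) ≤ ε * |dotV d (redInDeg B) - dotV d x| :=
        mul_le_mul_of_nonneg_left (le_abs_self _) (le_of_lt hε)
      linarith
    have hBface : redInDeg B ∈ faceOfV c (graphNeighbotope G) :=
      ⟨hBQ, fun y hy => (hxmax y hy).trans_eq hkey.symm⟩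
    rw [hface] at hBface
    exact ⟨B, ⟨hBbr, c', fun v u u' _ _ hne => hgen' u u' hne, hBstr⟩, hBface⟩
end
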